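/- arXiv:1608.04944 — 9 statements merged into one kernel-verified Lean document; each statement's English description precedes it below -/
import Mathlib

section
/- Let u : ℝ → ℝ be smooth with u' > 0, u'' > 0, satisfying u'''/u'' + ((n-1)/u' - c)·u'' = n - u' with 0 < c < 1, and let Λ(s) = -(1/(2c·u''(s)))·(n - u'(s) + c·u''(s) + (n-1)·u''(s)/u'(s)). Then for every s ∈ ℝ with Λ(s) = 0, one has Λ'(s) ≥ 1/(2c) + (n-1)·u''(s)/(2c·(u'(s))²) > 0. -/
/-- At any point where `Λ(s) = 0`, the derivative of `Λ` satisfies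
`Λ'(s) ≥ 1/(2c) + (n-1) u''(s)/(2c u'(s)²) > 0`. -/
theorem stmt2 (n : ℕ) (hn : 2 ≤ n) (c : ℝ) (hc0 : 0 < c) (hc1 : c < 1)
    (u : ℝ → ℝ) (hu : ContDiff ℝ (⊤ : ℕ∞) u)
    (hu' : ∀ s, 0 < deriv u s) (hu'' : ∀ s, 0 < deriv (deriv u) s)
    (hODE : ∀ s, deriv (deriv (deriv u)) s / deriv (deriv u) s
      + (((n : ℝ) - 1) / deriv u s - c) * deriv (deriv u) s = (n : ℝ) - deriv u s)
    (Λ : ℝ → ℝ)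
    (hΛ : ∀ s, Λ s = -(1 / (2 * c * deriv (deriv u) s))
      * ((n : ℝ) - deriv u s + c * deriv (deriv u) s
        + ((n : ℝ) - 1) * deriv (deriv u) s / deriv u s)) :
    ∀ s, Λ s = 0 →
      1 / (2 * c) + ((n : ℝ) - 1) * deriv (deriv u) s / (2 * c * (deriv u s) ^ 2)
        ≤ deriv Λ s
      ∧ 0 < 1 / (2 * c) + ((n : ℝ) - 1) * deriv (deriv u) s / (2 * c * (deriv u s) ^ 2) := by
  intro s hs
  have hui : ContDiff ℝ ((⊤:ℕ∞):WithTop ℕ∞) u := hu.of_le (by simp)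
  have hdu1 : Differentiable ℝ (deriv u) :=
    ((contDiff_infty_iff_deriv.mp hui).2).differentiable (by simp)
  have hdu2 : Differentiable ℝ (deriv (deriv u)) :=
    ((contDiff_infty_iff_deriv.mp (contDiff_infty_iff_deriv.mp hui).2).2).differentiable (by simp)
  have hps := hu' s
  have hqs := hu'' s
  have hn1 : (1:ℝ) ≤ (n:ℝ) := by exact_mod_cast Nat.one_le_of_lt hn
  have hp0 : deriv u s ≠ 0 := ne_of_gt hps
  have hq0 : deriv (deriv u) s ≠ 0 := ne_of_gt hqs
  have hc0' : c ≠ 0 := ne_of_gt hc0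
  have hp : HasDerivAt (deriv u) (deriv (deriv u) s) s := (hdu1 s).hasDerivAt
  have hq : HasDerivAt (deriv (deriv u)) (deriv (deriv (deriv u)) s) s := (hdu2 s).hasDerivAt
  -- A(s) = 0
  have hA0 : (n:ℝ) - deriv u s + c * deriv (deriv u) s
      + ((n:ℝ)-1) * deriv (deriv u) s / deriv u s = 0 := by
    rw [hΛ s] at hs
    have hne : -(1 / (2 * c * deriv (deriv u) s)) ≠ 0 := by
      have : (0:ℝ) < 1 / (2 * c * deriv (deriv u) s) := by positivity
      exact neg_ne_zero.mpr (ne_of_gt this)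
    exact (mul_eq_zero.mp hs).resolve_left hne
  -- ODE solved for u'''
  have hr0 : deriv (deriv (deriv u)) s
      = (((n:ℝ) - deriv u s) - (((n:ℝ)-1) / deriv u s - c) * deriv (deriv u) s)
        * deriv (deriv u) s := by
    have h1 := hODE s
    have h2 : deriv (deriv (deriv u)) s / deriv (deriv u) s
        = ((n:ℝ) - deriv u s) - (((n:ℝ)-1) / deriv u s - c) * deriv (deriv u) s := by
      linarith
    exact (div_eq_iff hq0).mp h2
  -- derivative pieces
  have hA : HasDerivAt (fun x => (n:ℝ) - deriv u x + c * deriv (deriv u) x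
      + ((n:ℝ)-1) * deriv (deriv u) x / deriv u x)
      ((0 - deriv (deriv u) s + c * deriv (deriv (deriv u)) s)
        + ((((n:ℝ)-1) * deriv (deriv (deriv u)) s) * deriv u s
            - (((n:ℝ)-1) * deriv (deriv u) s) * deriv (deriv u) s) / (deriv u s)^2) s := by
    exact (((hasDerivAt_const s (n:ℝ)).sub hp).add (hq.const_mul c)).add
      ((hq.const_mul ((n:ℝ)-1)).div hp hp0)
  have hB : HasDerivAt (fun x => -(1 / (2 * c * deriv (deriv u) x)))
      (-((0 * (2 * c * deriv (deriv u) s) - 1 * (2 * c * deriv (deriv (deriv u)) s))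
        / (2 * c * deriv (deriv u) s)^2)) s := by
    exact ((hasDerivAt_const s (1:ℝ)).div (hq.const_mul (2*c)) (by positivity)).neg
  have hΛ' : HasDerivAt Λ
      (1/(2*c) + ((n:ℝ)-1) * deriv (deriv u) s / deriv u s
        + ((n:ℝ)-1) * (2*(n:ℝ)-1) * deriv (deriv u) s / (2*c*(deriv u s)^2)) s := by
    have hfun : Λ = fun x => -(1 / (2 * c * deriv (deriv u) x))
        * ((n:ℝ) - deriv u x + c * deriv (deriv u) x
          + ((n:ℝ)-1) * deriv (deriv u) x / deriv u x) := funext hΛ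
    rw [hfun]
    convert hB.mul hA using 1
    case e'_4 => rfl
    case e'_5 => rfl
    case e'_8 => rfl
    have hnp : (n:ℝ) - deriv u s = -(c * deriv (deriv u) s)
        - ((n:ℝ)-1) * deriv (deriv u) s / deriv u s := by linarith [hA0]
    rw [hr0, hnp]
    field_simp
    ring
  constructor
  · rw [hΛ'.deriv]
    have h1 : 0 ≤ ((n:ℝ)-1) * deriv (deriv u) s / deriv u s := by
      apply div_nonneg _ (le_of_lt hps)
      nlinarith
    have h2 : ((n:ℝ)-1) * deriv (deriv u) s / (2*c*(deriv u s)^2)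
        ≤ ((n:ℝ)-1) * (2*(n:ℝ)-1) * deriv (deriv u) s / (2*c*(deriv u s)^2) := by
      apply div_le_div_of_nonneg_right ?_ (by positivity)
      nlinarith [mul_nonneg (mul_nonneg (sub_nonneg.mpr hn1)
        (by linarith : (0:ℝ) ≤ 2*(n:ℝ)-2)) (le_of_lt hqs)]
    linarith
  · have h1 : (0:ℝ) < 1/(2*c) := by positivity
    have h2 : 0 ≤ ((n:ℝ)-1) * deriv (deriv u) s / (2*c*(deriv u s)^2) := by
      apply div_nonneg _ (by positivity)
      nlinarith
    linarith
end

section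
/- Let u : ℝ → ℝ be smooth with u' > 0, u'' > 0, satisfying u'''/u'' + ((n-1)/u' - c)·u'' = n - u' with 0 < c < 1, and let Λ(s) = -(1/(2c·u''(s)))·(n - u'(s) + c·u''(s) + (n-1)·u''(s)/u'(s)). Then for every s ∈ ℝ with Λ(s) = -1, one has Λ'(s) ≥ 1/(2c) > 0. -/
/-- At any point where `Λ(s) = -1`, one has `Λ'(s) ≥ 1/(2c) > 0`. -/
theorem stmt3 (n : ℕ) (hn : 2 ≤ n) (c : ℝ) (hc0 : 0 < c) (hc1 : c < 1)
    (u : ℝ → ℝ) (hu : ContDiff ℝ (⊤ : ℕ∞) u)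
    (hu' : ∀ s, 0 < deriv u s) (hu'' : ∀ s, 0 < deriv (deriv u) s)
    (hODE : ∀ s, deriv (deriv (deriv u)) s / deriv (deriv u) s
      + (((n : ℝ) - 1) / deriv u s - c) * deriv (deriv u) s = (n : ℝ) - deriv u s)
    (Λ : ℝ → ℝ)
    (hΛ : ∀ s, Λ s = -(1 / (2 * c * deriv (deriv u) s))
      * ((n : ℝ) - deriv u s + c * deriv (deriv u) s
        + ((n : ℝ) - 1) * deriv (deriv u) s / deriv u s)) :
    ∀ s, Λ s = -1 → 1 / (2 * c) ≤ deriv Λ s ∧ 0 < 1 / (2 * c) := by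
  intro s hs
  have hc2 : 0 < 1 / (2 * c) := by positivity
  refine ⟨?_, hc2⟩
  set p : ℝ → ℝ := deriv u with hp_def
  set q : ℝ → ℝ := deriv p with hq_def
  set r : ℝ → ℝ := deriv q with hr_def
  have husm : ContDiff ℝ (⊤ : ℕ∞) u := hu.of_le (by simp)
  have hup : ContDiff ℝ (⊤ : ℕ∞) p := (contDiff_infty_iff_deriv.mp husm).2
  have huq : ContDiff ℝ (⊤ : ℕ∞) q := (contDiff_infty_iff_deriv.mp hup).2
  -- basic positivity / nonvanishing
  have hP : 0 < p s := hu' s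
  have hQ : 0 < q s := hu'' s
  have hPne : p s ≠ 0 := ne_of_gt hP
  have hQne : q s ≠ 0 := ne_of_gt hQ
  have hcne : c ≠ 0 := ne_of_gt hc0
  have hDne : 2 * c * q s ≠ 0 := by positivity
  -- derivatives
  have hPd : HasDerivAt p (q s) s := (hup.differentiable (by simp) s).hasDerivAt
  have hQd : HasDerivAt q (r s) s := (huq.differentiable (by simp) s).hasDerivAt
  set N : ℝ := (n : ℝ) with hN_def
  set F : ℝ → ℝ := fun t => N - p t + c * q t + (N - 1) * q t / p t with hF_def
  have hFd : HasDerivAt F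
      (0 - q s + c * r s + (((N - 1) * r s) * p s - ((N - 1) * q s) * q s) / (p s) ^ 2) s := by
    exact (((hasDerivAt_const s N).sub hPd).add (hQd.const_mul c)).add
      ((hQd.const_mul (N - 1)).div hPd hPne)
  have hGd : HasDerivAt (fun t => 2 * c * q t) (2 * c * r s) s := hQd.const_mul (2 * c)
  have hfun : Λ = fun t => -(F t / (2 * c * q t)) := by
    funext t
    rw [hΛ t]
    simp only [hF_def]
    ring
  have hΛd : HasDerivAt Λ
      (-(((0 - q s + c * r s + (((N - 1) * r s) * p s - ((N - 1) * q s) * q s) / (p s) ^ 2)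
          * (2 * c * q s) - F s * (2 * c * r s)) / (2 * c * q s) ^ 2)) s := by
    rw [hfun]
    exact (hFd.div hGd hDne).neg
  have hD := hΛd.deriv
  -- from Λ s = -1 : F s = 2 c q s
  have hFs : F s = 2 * c * q s := by
    have h := hΛ s
    rw [hs] at h
    simp only [hF_def, hN_def]
    field_simp at h ⊢
    linarith
  -- from the ODE and hFs : r s = 2 c q s ^ 2 - 2 (N-1) q s ^ 2 / p s
  have hODEs := hODE s
  have hR : r s = 2 * c * q s ^ 2 - 2 * (N - 1) * q s ^ 2 / p s := by
    have hF2 : N - p s + c * q s + (N - 1) * q s / p s = 2 * c * q s := hFs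
    field_simp at hODEs hF2 ⊢
    nlinarith [hODEs, hF2, sq_nonneg (q s)]
  -- exact value of the derivative
  have hT : deriv Λ s
      = 1 / (2 * c) + (q s / c) * ((N - 1) / p s - c) ^ 2 + (N - 1) * q s / (2 * c * (p s) ^ 2) := by
    rw [hD, hFs, hR]
    field_simp
    ring
  rw [hT]
  have h1 : 0 ≤ (q s / c) * ((N - 1) / p s - c) ^ 2 := by positivity
  have hN1 : (0 : ℝ) ≤ N - 1 := by
    have : (2 : ℝ) ≤ N := by rw [hN_def]; exact_mod_cast hn
    linarith
  have h2 : 0 ≤ (N - 1) * q s / (2 * c * (p s) ^ 2) := by positivity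
  linarith
end

section
/- Let Λ : ℝ → ℝ be a continuously differentiable function such that Λ(s) → -∞ as s → -∞, Λ(s) → +∞ as s → +∞, and Λ'(s) > 0 whenever Λ(s) = 0 or Λ(s) = -1. Then there exist unique s₁ < s₂ such that Λ(s₁) = -1 and Λ(s₂) = 0; moreover Λ(s) < -1 for s < s₁, -1 < Λ(s) < 0 for s₁ < s < s₂, and Λ(s) > 0 for s > s₂. -/
/-!
Fix a level `c` at which every crossing has positive derivative. The set `{c ≤ f}` is closed and,
by the sign of the derivative at the points where `f = c`, contains a right neighbourhood of each
of its points, so once `f` reaches `c` it stays `≥ c`, and in fact `> c`, since `f` is `< c`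
just to the left of a point where `f = c`. Hence `f` meets `c` at most once, and at least once by
the intermediate value theorem. Applying this to the levels `-1` and `0` gives the two points.
-/

open Filter Set Topology

variable {f : ℝ → ℝ} {c : ℝ}

-- `0 < deriv f x` already forces `f` to be differentiable at `x`, since `deriv` is `0` otherwise.
lemma eventually_slope_pos_of_deriv_pos {x : ℝ} (hf : 0 < deriv f x) :
    ∀ᶠ y in 𝓝[≠] x, 0 < slope f x y :=
  (hasDerivAt_iff_tendsto_slope.mp
    (differentiableAt_of_deriv_ne_zero hf.ne').hasDerivAt).eventually (eventually_gt_nhds hf)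

lemma eventually_nhdsGT_lt_of_deriv_pos {x : ℝ} (hf : 0 < deriv f x) :
    ∀ᶠ y in 𝓝[>] x, f x < f y := by
  filter_upwards [nhdsGT_le_nhdsNE x (eventually_slope_pos_of_deriv_pos hf),
    self_mem_nhdsWithin] with y hslope hxy
  exact (slope_pos_iff hxy).mp hslope

lemma eventually_nhdsLT_lt_of_deriv_pos {x : ℝ} (hf : 0 < deriv f x) :
    ∀ᶠ y in 𝓝[<] x, f y < f x := by
  filter_upwards [nhdsLT_le_nhdsNE x (eventually_slope_pos_of_deriv_pos hf),
    self_mem_nhdsWithin] with y hslope hyx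
  exact (slope_pos_iff_gt hyx).mp hslope

section Level

variable (hf : Continuous f) (hcrit : ∀ x, f x = c → 0 < deriv f x)
include hf hcrit

lemma le_of_le_of_deriv_pos_at_level {a b : ℝ} (hab : a ≤ b) (ha : c ≤ f a) : c ≤ f b := by
  have hsub : Icc a b ⊆ {x | c ≤ f x} := by
    refine IsClosed.Icc_subset_of_forall_mem_nhdsWithin
      ((isClosed_le continuous_const hf).inter isClosed_Icc) ha ?_
    rintro x ⟨hx, -⟩
    rcases (show c ≤ f x from hx).lt_or_eq with hlt | heq
    · exact mem_nhdsWithin_of_mem_nhds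
        ((hf.continuousAt.eventually (eventually_gt_nhds hlt)).mono fun _ => le_of_lt)
    · filter_upwards [eventually_nhdsGT_lt_of_deriv_pos (hcrit x heq.symm)] with y hy
      exact (heq.trans_lt hy).le
  exact hsub ⟨hab, le_rfl⟩

lemma lt_of_le_of_deriv_pos_at_level {a b : ℝ} (hab : a < b) (ha : c ≤ f a) : c < f b := by
  refine (le_of_le_of_deriv_pos_at_level hf hcrit hab.le ha).lt_of_ne fun hb => ?_
  obtain ⟨y, hyb, hy⟩ :=
    ((eventually_nhdsLT_lt_of_deriv_pos (hcrit b hb.symm)).and (Ioo_mem_nhdsLT hab)).exists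
  linarith [le_of_le_of_deriv_pos_at_level hf hcrit hy.1.le ha]

lemma exists_crossing_of_deriv_pos_at_level
    (hbot : Tendsto f atBot atBot) (htop : Tendsto f atTop atTop) :
    ∃ s₀, f s₀ = c ∧ (∀ s, f s = c → s = s₀) ∧
      (∀ s, s < s₀ → f s < c) ∧ (∀ s, s₀ < s → c < f s) := by
  obtain ⟨s₀, hs₀⟩ := hf.surjective htop hbot c
  have hlt : ∀ s, s < s₀ → f s < c := fun s hs =>
    not_le.1 fun h => (lt_of_le_of_deriv_pos_at_level hf hcrit hs h).ne hs₀.symm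
  have hgt : ∀ s, s₀ < s → c < f s := fun s hs =>
    lt_of_le_of_deriv_pos_at_level hf hcrit hs hs₀.ge
  refine ⟨s₀, hs₀, fun s hs => ?_, hlt, hgt⟩
  exact le_antisymm (not_lt.1 fun h => (hgt s h).ne' hs) (not_lt.1 fun h => (hlt s h).ne hs)

end Level

/-- Abstract bifurcation lemma: a `C¹` function `Λ` tending to `-∞`
at `-∞` and to `+∞` at `+∞`, with positive derivative at every point where it
takes the value `0` or `-1`, takes each of these values exactly once; moreover
`Λ < -1` before the first point, `-1 < Λ < 0` between them, `Λ > 0` after. -/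
theorem stmt4 (Λ : ℝ → ℝ) (hΛ : ContDiff ℝ 1 Λ)
    (hbot : Filter.Tendsto Λ Filter.atBot Filter.atBot)
    (htop : Filter.Tendsto Λ Filter.atTop Filter.atTop)
    (hcrit : ∀ s, (Λ s = 0 ∨ Λ s = -1) → 0 < deriv Λ s) :
    ∃ s₁ s₂ : ℝ, s₁ < s₂ ∧ Λ s₁ = -1 ∧ Λ s₂ = 0 ∧
      (∀ s, Λ s = -1 → s = s₁) ∧ (∀ s, Λ s = 0 → s = s₂) ∧
      (∀ s, s < s₁ → Λ s < -1) ∧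
      (∀ s, s₁ < s → s < s₂ → -1 < Λ s ∧ Λ s < 0) ∧
      (∀ s, s₂ < s → 0 < Λ s) := by
  obtain ⟨s₁, hΛ₁, huniq₁, hlt₁, hgt₁⟩ := exists_crossing_of_deriv_pos_at_level
    hΛ.continuous (fun s hs => hcrit s (.inr hs)) hbot htop
  obtain ⟨s₂, hΛ₂, huniq₂, hlt₂, hgt₂⟩ := exists_crossing_of_deriv_pos_at_level
    hΛ.continuous (fun s hs => hcrit s (.inl hs)) hbot htop
  have h₁₂ : s₁ < s₂ :=
    lt_of_le_of_ne (not_lt.1 fun h => by linarith [hgt₂ s₁ h]) (by rintro rfl; linarith)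
  exact ⟨s₁, s₂, h₁₂, hΛ₁, hΛ₂, huniq₁, huniq₂, hlt₁,
    fun s h₁ h₂ => ⟨hgt₁ s h₁, hlt₂ s h₂⟩, hgt₂⟩
end

section
/- Under the assumptions of the previous asymptotic setup, the function Λ(s) = -(1/(2c·u''(s)))·(n - u'(s) + c·u''(s) + (n-1)·u''(s)/u'(s)) satisfies Λ(s) → -∞ with Λ(s) = O(e^{-ks}) as s → -∞, and Λ(s) → +∞ with Λ(s) = O(e^{ks}) as s → +∞. -/
open Filter Asymptotics

/-- Helper: if `Λ * G` tends to a limit, then `Λ = O(G⁻¹)` provided `G` never vanishes. -/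
lemma aux_bigO {l : Filter ℝ} {Λ G : ℝ → ℝ} {L : ℝ} (hG : ∀ s, G s ≠ 0)
    (h : Filter.Tendsto (fun s => Λ s * G s) l (nhds L)) :
    Λ =O[l] fun s => (G s)⁻¹ := by
  have h1 : (fun s => Λ s * G s) =O[l] (fun _ => (1 : ℝ)) := h.isBigO_one ℝ
  have h2 := h1.mul (isBigO_refl (fun s => (G s)⁻¹) l)
  refine h2.congr (fun s => ?_) (fun s => one_mul _)
  rw [mul_assoc, mul_inv_cancel₀ (hG s), mul_one]

/-- Under the asymptotic setup of the Cao–Koiso profile, the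
coefficient function `Λ(s) = -(1/(2c u''))(n - u' + c u'' + (n-1) u''/u')`
satisfies `Λ → -∞` with `Λ = O(e^{-ks})` as `s → -∞`, and `Λ → +∞` with
`Λ = O(e^{ks})` as `s → +∞`. -/
theorem stmt6 (n k : ℕ) (hn : 2 ≤ n) (hk1 : 1 ≤ k) (hkn : k ≤ n - 1)
    (c : ℝ) (hc0 : 0 < c) (hc1 : c < 1) (a₁ b₁ : ℝ) (ha₁ : 0 < a₁) (hb₁ : 0 < b₁)
    (u : ℝ → ℝ) (hu : ContDiff ℝ (⊤ : ℕ∞) u)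
    (hu' : ∀ s, 0 < deriv u s) (hu'' : ∀ s, 0 < deriv (deriv u) s)
    (hbot0 : (fun s => u s - (((n : ℝ) - (k : ℝ)) * s + a₁ * Real.exp ((k : ℝ) * s)))
      =O[atBot] fun s => Real.exp (2 * (k : ℝ) * s))
    (hbot1 : (fun s => deriv u s - (((n : ℝ) - (k : ℝ)) + a₁ * (k : ℝ) * Real.exp ((k : ℝ) * s)))
      =O[atBot] fun s => Real.exp (2 * (k : ℝ) * s))
    (hbot2 : (fun s => deriv (deriv u) s - a₁ * (k : ℝ) ^ 2 * Real.exp ((k : ℝ) * s))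
      =O[atBot] fun s => Real.exp (2 * (k : ℝ) * s))
    (htop0 : (fun s => u s - (((n : ℝ) + (k : ℝ)) * s + b₁ * Real.exp (-(k : ℝ) * s)))
      =O[atTop] fun s => Real.exp (-2 * (k : ℝ) * s))
    (htop1 : (fun s => deriv u s - (((n : ℝ) + (k : ℝ)) - b₁ * (k : ℝ) * Real.exp (-(k : ℝ) * s)))
      =O[atTop] fun s => Real.exp (-2 * (k : ℝ) * s))
    (htop2 : (fun s => deriv (deriv u) s - b₁ * (k : ℝ) ^ 2 * Real.exp (-(k : ℝ) * s))
      =O[atTop] fun s => Real.exp (-2 * (k : ℝ) * s))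
    (Λ : ℝ → ℝ)
    (hΛ : ∀ s, Λ s = -(1 / (2 * c * deriv (deriv u) s))
      * ((n : ℝ) - deriv u s + c * deriv (deriv u) s
        + ((n : ℝ) - 1) * deriv (deriv u) s / deriv u s)) :
    Tendsto Λ atBot atBot
    ∧ Λ =O[atBot] (fun s => Real.exp (-(k : ℝ) * s))
    ∧ Tendsto Λ atTop atTop
    ∧ Λ =O[atTop] (fun s => Real.exp ((k : ℝ) * s)) := by
  set K : ℝ := (k : ℝ) with hKdef
  have hK : (0 : ℝ) < K := by
    have h : 0 < k := hk1
    rw [hKdef]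
    exact_mod_cast h
  have hnk : (0 : ℝ) < (n : ℝ) - K := by
    have h1 : (k : ℝ) ≤ ((n - 1 : ℕ) : ℝ) := by exact_mod_cast hkn
    have h2 : ((n - 1 : ℕ) : ℝ) = (n : ℝ) - 1 := by
      have : 1 ≤ n := le_trans (by norm_num) hn
      push_cast [Nat.cast_sub this]; ring
    nlinarith
  -- elementary exponential limits at -∞
  have eKbot : Tendsto (fun s => Real.exp (K * s)) atBot (nhds 0) :=
    Real.tendsto_exp_atBot.comp (tendsto_id.const_mul_atBot hK)
  have e2Kbot : Tendsto (fun s => Real.exp (2 * K * s)) atBot (nhds 0) :=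
    Real.tendsto_exp_atBot.comp (tendsto_id.const_mul_atBot (by linarith))
  have enegKbot : Tendsto (fun s => Real.exp (-K * s)) atBot atTop :=
    Real.tendsto_exp_atTop.comp (tendsto_id.const_mul_atBot_of_neg (by linarith))
  -- at +∞
  have eKtop : Tendsto (fun s => Real.exp (-K * s)) atTop (nhds 0) :=
    Real.tendsto_exp_atBot.comp (tendsto_id.const_mul_atTop_of_neg (by linarith))
  have e2Ktop : Tendsto (fun s => Real.exp (-2 * K * s)) atTop (nhds 0) :=
    Real.tendsto_exp_atBot.comp (tendsto_id.const_mul_atTop_of_neg (by linarith))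
  have eposKtop : Tendsto (fun s => Real.exp (K * s)) atTop atTop :=
    Real.tendsto_exp_atTop.comp (tendsto_id.const_mul_atTop hK)
  -- limits at -∞
  have lim1 : Tendsto (deriv u) atBot (nhds ((n : ℝ) - K)) := by
    have h0 : Tendsto
        (fun s => deriv u s - (((n : ℝ) - K) + a₁ * K * Real.exp (K * s))) atBot (nhds 0) :=
      hbot1.trans_tendsto e2Kbot
    have h1 := h0.add ((tendsto_const_nhds (x := ((n : ℝ) - K))).add (eKbot.const_mul (a₁ * K)))
    simpa using h1
  have lim2 : Tendsto (fun s => deriv (deriv u) s * Real.exp (-K * s)) atBot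
      (nhds (a₁ * K ^ 2)) := by
    have h0 : (fun s => (deriv (deriv u) s - a₁ * K ^ 2 * Real.exp (K * s)) * Real.exp (-K * s))
        =O[atBot] fun s => Real.exp (2 * K * s) * Real.exp (-K * s) :=
      hbot2.mul (isBigO_refl _ _)
    have h0' : Tendsto
        (fun s => (deriv (deriv u) s - a₁ * K ^ 2 * Real.exp (K * s)) * Real.exp (-K * s))
        atBot (nhds 0) := by
      refine h0.trans_tendsto ?_
      have : (fun s : ℝ => Real.exp (2 * K * s) * Real.exp (-K * s))
          = fun s => Real.exp (K * s) := by
        funext s; rw [← Real.exp_add]; ring_nf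
      rw [this]; exact eKbot
    have h1 := h0'.add tendsto_const_nhds (b := a₁ * K ^ 2)
    rw [zero_add] at h1
    refine h1.congr fun s => ?_
    have hz : K * s + -K * s = 0 := by ring
    have he : Real.exp (K * s) * Real.exp (-K * s) = 1 := by
      rw [← Real.exp_add, hz, Real.exp_zero]
    calc (deriv (deriv u) s - a₁ * K ^ 2 * Real.exp (K * s)) * Real.exp (-K * s) + a₁ * K ^ 2
        = deriv (deriv u) s * Real.exp (-K * s)
          - a₁ * K ^ 2 * (Real.exp (K * s) * Real.exp (-K * s)) + a₁ * K ^ 2 := by ring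
      _ = deriv (deriv u) s * Real.exp (-K * s) := by rw [he]; ring
  have lim2' : Tendsto (fun s => deriv (deriv u) s) atBot (nhds 0) := by
    have h1 := lim2.mul eKbot
    rw [mul_zero] at h1
    refine h1.congr fun s => ?_
    have he : Real.exp (-K * s) * Real.exp (K * s) = 1 := by
      have hz : -K * s + K * s = 0 := by ring
      rw [← Real.exp_add, hz, Real.exp_zero]
    calc deriv (deriv u) s * Real.exp (-K * s) * Real.exp (K * s)
        = deriv (deriv u) s * (Real.exp (-K * s) * Real.exp (K * s)) := by ring
      _ = deriv (deriv u) s := by rw [he, mul_one]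
  have limB : Tendsto (fun s => (n : ℝ) - deriv u s + c * deriv (deriv u) s
      + ((n : ℝ) - 1) * deriv (deriv u) s / deriv u s) atBot (nhds K) := by
    have h1 : Tendsto (fun s => (n : ℝ) - deriv u s) atBot (nhds ((n : ℝ) - ((n : ℝ) - K))) :=
      tendsto_const_nhds.sub lim1
    have h2 : Tendsto (fun s => c * deriv (deriv u) s) atBot (nhds (c * 0)) :=
      lim2'.const_mul c
    have h3 : Tendsto (fun s => ((n : ℝ) - 1) * deriv (deriv u) s / deriv u s) atBot
        (nhds (((n : ℝ) - 1) * 0 / ((n : ℝ) - K))) :=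
      (lim2'.const_mul _).div lim1 (by linarith)
    have := (h1.add h2).add h3
    convert this using 2 <;> ring
  have limΛbot : Tendsto (fun s => Λ s * Real.exp (K * s)) atBot
      (nhds (-(K / (2 * c * (a₁ * K ^ 2))))) := by
    have hden : Tendsto (fun s => 2 * c * (deriv (deriv u) s * Real.exp (-K * s))) atBot
        (nhds (2 * c * (a₁ * K ^ 2))) := lim2.const_mul _
    have h := (limB.div hden (by positivity)).neg
    refine h.congr fun s => ?_
    simp only [Pi.div_apply]
    rw [hΛ s]
    have h2 : deriv (deriv u) s ≠ 0 := ne_of_gt (hu'' s)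
    have he : Real.exp (-K * s) = (Real.exp (K * s))⁻¹ := by
      rw [← Real.exp_neg]; ring_nf
    rw [he]
    field_simp
  have hLneg : -(K / (2 * c * (a₁ * K ^ 2))) < 0 := by
    have : 0 < K / (2 * c * (a₁ * K ^ 2)) := by positivity
    linarith
  have tendsto_bot : Tendsto Λ atBot atBot := by
    have h := Filter.Tendsto.neg_mul_atTop hLneg limΛbot enegKbot
    refine h.congr fun s => ?_
    have he : Real.exp (K * s) * Real.exp (-K * s) = 1 := by
      have hz : K * s + -K * s = 0 := by ring
      rw [← Real.exp_add, hz, Real.exp_zero]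
    calc Λ s * Real.exp (K * s) * Real.exp (-K * s)
        = Λ s * (Real.exp (K * s) * Real.exp (-K * s)) := by ring
      _ = Λ s := by rw [he, mul_one]
  have bigO_bot : Λ =O[atBot] fun s => Real.exp (-K * s) := by
    have h := aux_bigO (G := fun s => Real.exp (K * s)) (fun s => (Real.exp_pos _).ne') limΛbot
    refine h.congr (fun s => rfl) fun s => ?_
    rw [← Real.exp_neg]; ring_nf
  -- limits at +∞
  have lim1t : Tendsto (deriv u) atTop (nhds ((n : ℝ) + K)) := by
    have h0 : Tendsto
        (fun s => deriv u s - (((n : ℝ) + K) - b₁ * K * Real.exp (-K * s))) atTop (nhds 0) :=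
      htop1.trans_tendsto e2Ktop
    have h1 := h0.add ((tendsto_const_nhds (x := ((n : ℝ) + K))).sub (eKtop.const_mul (b₁ * K)))
    simpa using h1
  have lim2t : Tendsto (fun s => deriv (deriv u) s * Real.exp (K * s)) atTop
      (nhds (b₁ * K ^ 2)) := by
    have h0 : (fun s => (deriv (deriv u) s - b₁ * K ^ 2 * Real.exp (-K * s)) * Real.exp (K * s))
        =O[atTop] fun s => Real.exp (-2 * K * s) * Real.exp (K * s) :=
      htop2.mul (isBigO_refl _ _)
    have h0' : Tendsto
        (fun s => (deriv (deriv u) s - b₁ * K ^ 2 * Real.exp (-K * s)) * Real.exp (K * s))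
        atTop (nhds 0) := by
      refine h0.trans_tendsto ?_
      have : (fun s : ℝ => Real.exp (-2 * K * s) * Real.exp (K * s))
          = fun s => Real.exp (-K * s) := by
        funext s; rw [← Real.exp_add]; ring_nf
      rw [this]; exact eKtop
    have h1 := h0'.add tendsto_const_nhds (b := b₁ * K ^ 2)
    rw [zero_add] at h1
    refine h1.congr fun s => ?_
    have hz : -K * s + K * s = 0 := by ring
    have he : Real.exp (-K * s) * Real.exp (K * s) = 1 := by
      rw [← Real.exp_add, hz, Real.exp_zero]
    calc (deriv (deriv u) s - b₁ * K ^ 2 * Real.exp (-K * s)) * Real.exp (K * s) + b₁ * K ^ 2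
        = deriv (deriv u) s * Real.exp (K * s)
          - b₁ * K ^ 2 * (Real.exp (-K * s) * Real.exp (K * s)) + b₁ * K ^ 2 := by ring
      _ = deriv (deriv u) s * Real.exp (K * s) := by rw [he]; ring
  have lim2t' : Tendsto (fun s => deriv (deriv u) s) atTop (nhds 0) := by
    have h1 := lim2t.mul eKtop
    rw [mul_zero] at h1
    refine h1.congr fun s => ?_
    have he : Real.exp (K * s) * Real.exp (-K * s) = 1 := by
      have hz : K * s + -K * s = 0 := by ring
      rw [← Real.exp_add, hz, Real.exp_zero]
    calc deriv (deriv u) s * Real.exp (K * s) * Real.exp (-K * s)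
        = deriv (deriv u) s * (Real.exp (K * s) * Real.exp (-K * s)) := by ring
      _ = deriv (deriv u) s := by rw [he, mul_one]
  have limBt : Tendsto (fun s => (n : ℝ) - deriv u s + c * deriv (deriv u) s
      + ((n : ℝ) - 1) * deriv (deriv u) s / deriv u s) atTop (nhds (-K)) := by
    have h1 : Tendsto (fun s => (n : ℝ) - deriv u s) atTop (nhds ((n : ℝ) - ((n : ℝ) + K))) :=
      tendsto_const_nhds.sub lim1t
    have h2 : Tendsto (fun s => c * deriv (deriv u) s) atTop (nhds (c * 0)) :=
      lim2t'.const_mul c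
    have h3 : Tendsto (fun s => ((n : ℝ) - 1) * deriv (deriv u) s / deriv u s) atTop
        (nhds (((n : ℝ) - 1) * 0 / ((n : ℝ) + K))) :=
      (lim2t'.const_mul _).div lim1t (by positivity)
    have := (h1.add h2).add h3
    convert this using 2 <;> ring
  have limΛtop : Tendsto (fun s => Λ s * Real.exp (-K * s)) atTop
      (nhds (K / (2 * c * (b₁ * K ^ 2)))) := by
    have hden : Tendsto (fun s => 2 * c * (deriv (deriv u) s * Real.exp (K * s))) atTop
        (nhds (2 * c * (b₁ * K ^ 2))) := lim2t.const_mul _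
    have h := (limBt.div hden (by positivity)).neg
    have heq : -(-K / (2 * c * (b₁ * K ^ 2))) = K / (2 * c * (b₁ * K ^ 2)) := by ring
    rw [heq] at h
    refine h.congr fun s => ?_
    simp only [Pi.div_apply]
    rw [hΛ s]
    have h2 : deriv (deriv u) s ≠ 0 := ne_of_gt (hu'' s)
    have he : Real.exp (K * s) = (Real.exp (-K * s))⁻¹ := by
      rw [← Real.exp_neg]; ring_nf
    rw [he]
    field_simp
  have hLpos : 0 < K / (2 * c * (b₁ * K ^ 2)) := by positivity
  have tendsto_top : Tendsto Λ atTop atTop := by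
    have h := Filter.Tendsto.pos_mul_atTop hLpos limΛtop eposKtop
    refine h.congr fun s => ?_
    have he : Real.exp (-K * s) * Real.exp (K * s) = 1 := by
      have hz : -K * s + K * s = 0 := by ring
      rw [← Real.exp_add, hz, Real.exp_zero]
    calc Λ s * Real.exp (-K * s) * Real.exp (K * s)
        = Λ s * (Real.exp (-K * s) * Real.exp (K * s)) := by ring
      _ = Λ s := by rw [he, mul_one]
  have bigO_top : Λ =O[atTop] fun s => Real.exp (K * s) := by
    have h := aux_bigO (G := fun s => Real.exp (-K * s)) (fun s => (Real.exp_pos _).ne') limΛtop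
    refine h.congr (fun s => rfl) fun s => ?_
    rw [← Real.exp_neg]; ring_nf
  exact ⟨tendsto_bot, bigO_bot, tendsto_top, bigO_top⟩
end

section
/- Let λ : (0,∞) → ℝ be continuous with λ(ρ) ≤ α < -1 for ρ ∈ (0,r] and with 1/(ρ(λ(ρ)+1)) = O(ρ^{2k-1}) as ρ → 0 for some integer k ≥ 1. Fix T > 0, c > 0 and 0 < r. Let R : [0,T') → (0,∞) be the maximal solution of R'(t) = (c/(2(T-t)))·(λ(R(t)) + 1)·R(t), R(0) = r. Then T' < T, R(t) → 0 as t → T', and there is a constant C > 0 with R(t)^{-2k} ≤ C/(T'-t) for t close to T'. -/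
/-!
Separation of variables: with `H(ρ) = ∫_ρ^r ds / (s (λ(s) + 1))` (`sepIntegral`, strictly
increasing on `(0, r]` since `λ + 1 < 0` there) and `φ(t) = (c/2) (log (T - t) - log T)`
(`timeIntegral`), every solution satisfies `H(R(t)) = φ(t)`. The big-O hypothesis gives
`H(b) - H(a) ≤ C b^{2k} / (2k)` for small `0 < a ≤ b`, so `H` is bounded below; since `φ → -∞`
at `T`, this forces `T' < T`. If `R` stayed above some `m > 0`, then `H⁻¹ ∘ φ` would continue
the solution past `T'`, contradicting maximality; hence `R → 0`. Letting `s → T'` in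
`φ(t) - φ(s) = H(R t) - H(R s) ≤ C R(t)^{2k} / (2k)` and using `φ(t) - φ(T') ≥ c (T' - t) / (2T)`
gives the type I bound.
-/

open Filter Asymptotics Set Topology

theorem StrictMonoOn.exists_continuousAt_invOn {f : ℝ → ℝ} {a b : ℝ} (hab : a ≤ b)
    (hmono : StrictMonoOn f (Icc a b)) (hcont : ContinuousOn f (Icc a b)) :
    ∃ g : ℝ → ℝ, MapsTo g (Ioo (f a) (f b)) (Ioo a b) ∧ (∀ y ∈ Ioo (f a) (f b), f (g y) = y) ∧
      (∀ x ∈ Ioo a b, g (f x) = x) ∧ ∀ y ∈ Ioo (f a) (f b), ContinuousAt g y := by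
  have hsurj : SurjOn f (Ioo a b) (Ioo (f a) (f b)) := intermediate_value_Ioo hab hcont
  have hinj : InjOn f (Ioo a b) := (hmono.mono Ioo_subset_Icc_self).injOn
  set g := Function.invFunOn f (Ioo a b)
  have hmaps : MapsTo g (Ioo (f a) (f b)) (Ioo a b) := hsurj.mapsTo_invFunOn
  have hright : ∀ y ∈ Ioo (f a) (f b), f (g y) = y := fun y hy => hsurj.rightInvOn_invFunOn hy
  have hleft : ∀ x ∈ Ioo a b, g (f x) = x := fun x hx => hinj.leftInvOn_invFunOn hx
  have hgmono : StrictMonoOn g (Ioo (f a) (f b)) := by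
    intro y₁ hy₁ y₂ hy₂ hy
    by_contra! hle
    have := (hmono.le_iff_le (Ioo_subset_Icc_self (hmaps hy₂))
      (Ioo_subset_Icc_self (hmaps hy₁))).2 hle
    rw [hright y₁ hy₁, hright y₂ hy₂] at this
    linarith
  have himage : g '' Ioo (f a) (f b) = Ioo a b := by
    refine (hmaps.image_subset).antisymm fun x hx => ⟨f x, ?_, hleft x hx⟩
    exact ⟨hmono (left_mem_Icc.2 hab) (Ioo_subset_Icc_self hx) hx.1,
      hmono (Ioo_subset_Icc_self hx) (right_mem_Icc.2 hab) hx.2⟩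
  refine ⟨g, hmaps, hright, hleft, fun y hy => hgmono.continuousAt_of_image_mem_nhds
    (isOpen_Ioo.mem_nhds hy) ?_⟩
  rw [himage]
  exact isOpen_Ioo.mem_nhds (hmaps hy)

noncomputable def invGrowth (lam : ℝ → ℝ) (s : ℝ) : ℝ := 1 / (s * (lam s + 1))

noncomputable def sepIntegral (lam : ℝ → ℝ) (r ρ : ℝ) : ℝ := ∫ s in ρ..r, invGrowth lam s

section SepIntegral

variable {lam : ℝ → ℝ} {r : ℝ}

@[simp]
theorem sepIntegral_self : sepIntegral lam r r = 0 := intervalIntegral.integral_same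

theorem invGrowth_neg (hneg : ∀ s ∈ Ioc 0 r, lam s + 1 < 0) {s : ℝ} (hs : s ∈ Ioc 0 r) :
    invGrowth lam s < 0 :=
  one_div_neg.2 (mul_neg_of_pos_of_neg hs.1 (hneg s hs))

theorem exists_abs_invGrowth_le {n : ℕ} (hr : 0 < r)
    (hO : (fun ρ => 1 / (ρ * (lam ρ + 1))) =O[𝓝[>] 0] fun ρ => ρ ^ n) :
    ∃ C > 0, ∃ δ ∈ Ioc 0 r, ∀ s ∈ Ioc 0 δ, |invGrowth lam s| ≤ C * s ^ n := by
  obtain ⟨C, hC, hCO⟩ := hO.exists_pos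
  obtain ⟨u, hu, hsub⟩ := mem_nhdsGT_iff_exists_Ioc_subset.1 (isBigOWith_iff.1 hCO)
  refine ⟨C, hC, min u r, ⟨lt_min hu hr, min_le_right _ _⟩, fun s hs => ?_⟩
  have : ‖1 / (s * (lam s + 1))‖ ≤ C * ‖s ^ n‖ := hsub ⟨hs.1, hs.2.trans (min_le_left _ _)⟩
  rwa [Real.norm_eq_abs, Real.norm_of_nonneg (pow_nonneg hs.1.le n)] at this

variable (hcont : ContinuousOn lam (Ioi 0)) (hneg : ∀ s ∈ Ioc 0 r, lam s + 1 < 0)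
include hcont hneg

theorem continuousAt_invGrowth {s : ℝ} (hs : s ∈ Ioc 0 r) : ContinuousAt (invGrowth lam) s :=
  continuousAt_const.div (continuousAt_id.mul
    ((hcont.continuousAt (Ioi_mem_nhds hs.1)).add continuousAt_const))
    (mul_ne_zero hs.1.ne' (hneg s hs).ne)

theorem intervalIntegrable_invGrowth {a b : ℝ} (ha : 0 < a) (hab : a ≤ b) (hb : b ≤ r) :
    IntervalIntegrable (invGrowth lam) MeasureTheory.volume a b := by
  refine ContinuousOn.intervalIntegrable fun s hs => ?_
  rw [uIcc_of_le hab] at hs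
  exact (continuousAt_invGrowth hcont hneg ⟨ha.trans_le hs.1, hs.2.trans hb⟩).continuousWithinAt

omit hneg in
theorem stronglyMeasurableAtFilter_invGrowth {s : ℝ} (hs : 0 < s) :
    StronglyMeasurableAtFilter (invGrowth lam) (𝓝 s) :=
  ⟨Ioi 0, Ioi_mem_nhds hs, (aemeasurable_const.div (aemeasurable_id.mul
    ((hcont.aemeasurable measurableSet_Ioi).add aemeasurable_const))).aestronglyMeasurable⟩

theorem hasDerivAt_sepIntegral {ρ : ℝ} (hρ : ρ ∈ Ioc 0 r) :
    HasDerivAt (sepIntegral lam r) (-invGrowth lam ρ) ρ :=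
  intervalIntegral.integral_hasDerivAt_left
    (intervalIntegrable_invGrowth hcont hneg hρ.1 hρ.2 le_rfl)
    (stronglyMeasurableAtFilter_invGrowth hcont hρ.1) (continuousAt_invGrowth hcont hneg hρ)

theorem continuousOn_sepIntegral : ContinuousOn (sepIntegral lam r) (Ioc 0 r) := fun _ hρ =>
  (hasDerivAt_sepIntegral hcont hneg hρ).continuousAt.continuousWithinAt

theorem strictMonoOn_sepIntegral : StrictMonoOn (sepIntegral lam r) (Ioc 0 r) := by
  refine strictMonoOn_of_deriv_pos (convex_Ioc 0 r) (continuousOn_sepIntegral hcont hneg)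
    fun ρ hρ => ?_
  rw [interior_Ioc] at hρ
  rw [(hasDerivAt_sepIntegral hcont hneg (Ioo_subset_Ioc_self hρ)).deriv, neg_pos]
  exact invGrowth_neg hneg (Ioo_subset_Ioc_self hρ)

theorem sepIntegral_sub_le {C δ : ℝ} {n : ℕ} (hC0 : 0 ≤ C) (hδ : δ ≤ r)
    (hC : ∀ s ∈ Ioc 0 δ, |invGrowth lam s| ≤ C * s ^ n)
    {a b : ℝ} (ha : 0 < a) (hab : a ≤ b) (hb : b ≤ δ) :
    sepIntegral lam r b - sepIntegral lam r a ≤ C * b ^ (n + 1) / (n + 1) := by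
  have hint := intervalIntegrable_invGrowth hcont hneg ha hab (hb.trans hδ)
  have hsplit : sepIntegral lam r b - sepIntegral lam r a = ∫ s in a..b, -invGrowth lam s := by
    rw [intervalIntegral.integral_neg, sepIntegral, sepIntegral,
      ← intervalIntegral.integral_add_adjacent_intervals hint
        (intervalIntegrable_invGrowth hcont hneg (ha.trans_le hab) (hb.trans hδ) le_rfl)]
    ring
  have hpow : (∫ s in a..b, C * s ^ n) = C * (b ^ (n + 1) - a ^ (n + 1)) / (n + 1) := by
    rw [intervalIntegral.integral_const_mul, integral_pow, mul_div_assoc]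
  calc sepIntegral lam r b - sepIntegral lam r a = ∫ s in a..b, -invGrowth lam s := hsplit
    _ ≤ ∫ s in a..b, C * s ^ n :=
      intervalIntegral.integral_mono_on hab hint.neg
        ((intervalIntegral.intervalIntegrable_pow n).const_mul C)
        fun s hs => (neg_le_abs _).trans (hC s ⟨ha.trans_le hs.1, hs.2.trans hb⟩)
    _ = C * (b ^ (n + 1) - a ^ (n + 1)) / (n + 1) := hpow
    _ ≤ C * b ^ (n + 1) / (n + 1) := by
      gcongr
      linarith [pow_pos ha (n + 1)]

theorem exists_forall_le_sepIntegral {n : ℕ} (hr : 0 < r)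
    (hO : (fun ρ => 1 / (ρ * (lam ρ + 1))) =O[𝓝[>] 0] fun ρ => ρ ^ n) :
    ∃ M, ∀ ρ ∈ Ioc 0 r, M ≤ sepIntegral lam r ρ := by
  obtain ⟨C, hC, δ, hδ, hCδ⟩ := exists_abs_invGrowth_le hr hO
  refine ⟨sepIntegral lam r δ - C * δ ^ (n + 1) / (n + 1), fun ρ hρ => ?_⟩
  rcases le_or_gt ρ δ with hρδ | hδρ
  · linarith [sepIntegral_sub_le hcont hneg hC.le hδ.2 hCδ hρ.1 hρδ le_rfl]
  · have := strictMonoOn_sepIntegral hcont hneg hδ hρ hδρ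
    have : 0 ≤ C * δ ^ (n + 1) / (n + 1) := by have := hδ.1; positivity
    linarith

end SepIntegral

noncomputable def timeIntegral (T c t : ℝ) : ℝ := c / 2 * (Real.log (T - t) - Real.log T)

section TimeIntegral

variable {T c : ℝ}

theorem hasDerivAt_timeIntegral {t : ℝ} (ht : t < T) :
    HasDerivAt (timeIntegral T c) (-(c / (2 * (T - t)))) t := by
  have hlog := ((hasDerivAt_id' t).const_sub T).log (sub_pos.2 ht).ne'
  refine ((hlog.sub_const (Real.log T)).const_mul (c / 2)).congr_deriv ?_
  field_simp

@[simp]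
theorem timeIntegral_zero : timeIntegral T c 0 = 0 := by simp [timeIntegral]

theorem tendsto_timeIntegral_atBot (hc : 0 < c) :
    Tendsto (timeIntegral T c) (𝓝[<] T) atBot := by
  have hsub : Tendsto (fun t => T - t) (𝓝[<] T) (𝓝[>] 0) := by
    have := ((continuous_sub_left T).continuousWithinAt (s := Iio T)
      (x := T)).tendsto_nhdsWithin (t := Ioi 0) fun t (ht : t < T) => sub_pos.2 ht
    simpa using this
  exact (tendsto_atBot_add_const_right _ _
    (Real.tendsto_log_nhdsGT_zero.comp hsub)).const_mul_atBot (half_pos hc)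

theorem timeIntegral_lt_timeIntegral (hc : 0 < c) {t₁ t₂ : ℝ} (h : t₁ < t₂) (h₂ : t₂ < T) :
    timeIntegral T c t₂ < timeIntegral T c t₁ := by
  have := Real.log_lt_log (sub_pos.2 h₂) (sub_lt_sub_left h T)
  unfold timeIntegral
  gcongr

theorem le_timeIntegral_sub (hT : 0 < T) (hc : 0 < c) {t T' : ℝ} (ht : 0 ≤ t) (htT' : t < T')
    (hT' : T' < T) : c * (T' - t) / (2 * T) ≤ timeIntegral T c t - timeIntegral T c T' := by
  have hlog := Real.one_sub_inv_le_log_of_pos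
    (div_pos (by linarith : 0 < T - t) (by linarith : 0 < T - T'))
  rw [Real.log_div (by linarith) (by linarith), inv_div] at hlog
  have : (T' - t) / T ≤ 1 - (T - T') / (T - t) := by
    rw [one_sub_div (by linarith), div_le_div_iff₀ hT (by linarith)]
    nlinarith
  rw [timeIntegral, timeIntegral]
  calc c * (T' - t) / (2 * T) = c / 2 * ((T' - t) / T) := by ring
    _ ≤ c / 2 * (Real.log (T - t) - Real.log (T - T')) := by gcongr; linarith
    _ = _ := by ring

end TimeIntegral

def SolvesRadiusODE (lam : ℝ → ℝ) (T c r T₂ : ℝ) (S : ℝ → ℝ) : Prop :=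
  S 0 = r ∧ ∀ t ∈ Ico 0 T₂, 0 < S t ∧ HasDerivAt S (c / (2 * (T - t)) * (lam (S t) + 1) * S t) t

section RadiusODE

variable {lam : ℝ → ℝ} {T c r : ℝ}

theorem radiusRate_neg (hc : 0 < c) (hneg : ∀ s ∈ Ioc 0 r, lam s + 1 < 0) {t ρ : ℝ} (ht : t < T)
    (hρ : ρ ∈ Ioc 0 r) : c / (2 * (T - t)) * (lam ρ + 1) * ρ < 0 := by
  have : 0 < c / (2 * (T - t)) := div_pos hc (by linarith)
  exact mul_neg_of_neg_of_pos (mul_neg_of_pos_of_neg this (hneg ρ hρ)) hρ.1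

theorem invGrowth_mul_radiusRate {t ρ : ℝ} (ht : t < T) (hρ : ρ ≠ 0) (hlam : lam ρ + 1 ≠ 0) :
    invGrowth lam ρ * (c / (2 * (T - t)) * (lam ρ + 1) * ρ) = c / (2 * (T - t)) := by
  have : T - t ≠ 0 := by linarith
  simp only [invGrowth]
  field_simp

variable (hcont : ContinuousOn lam (Ioi 0)) (hneg : ∀ s ∈ Ioc 0 r, lam s + 1 < 0)
include hcont hneg

theorem hasDerivAt_comp_timeIntegral {g : ℝ → ℝ} {t : ℝ} (ht : t < T)
    (hg : ContinuousAt g (timeIntegral T c t)) (hgr : g (timeIntegral T c t) ∈ Ioc 0 r)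
    (hinv : ∀ᶠ y in 𝓝 (timeIntegral T c t), sepIntegral lam r (g y) = y) :
    HasDerivAt (fun s => g (timeIntegral T c s))
      (c / (2 * (T - t)) * (lam (g (timeIntegral T c t)) + 1) * g (timeIntegral T c t)) t := by
  have hgd := HasDerivAt.of_local_left_inverse hg (hasDerivAt_sepIntegral hcont hneg hgr)
    (neg_ne_zero.2 (invGrowth_neg hneg hgr).ne) hinv
  refine (hgd.comp t (hasDerivAt_timeIntegral ht)).congr_deriv ?_
  have : T - t ≠ 0 := by linarith
  have := hgr.1.ne'
  have := (hneg _ hgr).ne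
  simp only [invGrowth]
  field_simp

theorem exists_solution_of_sepIntegral_lt (hc : 0 < c) {a T₂ : ℝ} (ha : 0 < a) (har : a < r)
    (hT₂ : T₂ < T) (haT₂ : sepIntegral lam r a < timeIntegral T c T₂) :
    ∃ g : ℝ → ℝ, (∀ ρ ∈ Ioo a r, g (sepIntegral lam r ρ) = ρ) ∧ ∀ t ∈ Ioo 0 T₂,
      0 < g (timeIntegral T c t) ∧ HasDerivAt (fun s => g (timeIntegral T c s))
        (c / (2 * (T - t)) * (lam (g (timeIntegral T c t)) + 1) * g (timeIntegral T c t)) t := by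
  have hsub : Icc a r ⊆ Ioc 0 r := Icc_subset_Ioc ha le_rfl
  obtain ⟨g, hgmaps, hright, hleft, hgcont⟩ := StrictMonoOn.exists_continuousAt_invOn har.le
    ((strictMonoOn_sepIntegral hcont hneg).mono hsub)
    ((continuousOn_sepIntegral hcont hneg).mono hsub)
  refine ⟨g, hleft, fun t ht => ?_⟩
  have hU : timeIntegral T c t ∈ Ioo (sepIntegral lam r a) (sepIntegral lam r r) := by
    rw [sepIntegral_self, ← timeIntegral_zero (T := T) (c := c)]
    exact ⟨haT₂.trans (timeIntegral_lt_timeIntegral hc ht.2 hT₂),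
      timeIntegral_lt_timeIntegral hc ht.1 (ht.2.trans hT₂)⟩
  have hgr : g (timeIntegral T c t) ∈ Ioc 0 r := hsub (Ioo_subset_Icc_self (hgmaps hU))
  exact ⟨hgr.1, hasDerivAt_comp_timeIntegral hcont hneg (ht.2.trans hT₂) (hgcont _ hU) hgr
    (mem_of_superset (isOpen_Ioo.mem_nhds hU) hright)⟩

end RadiusODE

namespace SolvesRadiusODE

variable {lam : ℝ → ℝ} {T c r T' : ℝ} {R : ℝ → ℝ}
  (hR : SolvesRadiusODE lam T c r T' R) (hc : 0 < c) (hneg : ∀ s ∈ Ioc 0 r, lam s + 1 < 0)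
include hR hc hneg

theorem le_initial (hT'T : T' ≤ T) {t : ℝ} (ht : t ∈ Ico 0 T') : R t ≤ r := by
  have hsol : ∀ x ∈ Icc 0 t, 0 < R x ∧
      HasDerivAt R (c / (2 * (T - x)) * (lam (R x) + 1) * R x) x :=
    fun x hx => hR.2 x ⟨hx.1, hx.2.trans_lt ht.2⟩
  refine image_le_of_deriv_right_lt_deriv_boundary' (B := fun _ => r) (B' := 0)
    (fun x hx => (hsol x hx).2.continuousAt.continuousWithinAt)
    (fun x hx => (hsol x (Ico_subset_Icc_self hx)).2.hasDerivWithinAt) hR.1.le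
    continuousOn_const (fun _ _ => hasDerivWithinAt_const _ _ _) (fun x hx hRx => ?_)
    ⟨ht.1, le_rfl⟩
  rw [Pi.zero_apply]
  exact radiusRate_neg hc hneg (by linarith [hx.2, ht.2])
    ⟨(hsol x (Ico_subset_Icc_self hx)).1, hRx.le⟩

theorem mem_Ioc (hT'T : T' ≤ T) {t : ℝ} (ht : t ∈ Ico 0 T') : R t ∈ Ioc 0 r :=
  ⟨(hR.2 t ht).1, hR.le_initial hc hneg hT'T ht⟩

theorem strictAntiOn (hT'T : T' ≤ T) : StrictAntiOn R (Ico 0 T') := by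
  refine strictAntiOn_of_deriv_neg (convex_Ico 0 T')
    (fun t ht => (hR.2 t ht).2.continuousAt.continuousWithinAt) fun t ht => ?_
  rw [interior_Ico] at ht
  have ht' := Ioo_subset_Ico_self ht
  rw [(hR.2 t ht').2.deriv]
  exact radiusRate_neg hc hneg (by linarith [ht.2]) (hR.mem_Ioc hc hneg hT'T ht')

theorem sepIntegral_eq (hcont : ContinuousOn lam (Ioi 0)) (hT'T : T' ≤ T) {t : ℝ}
    (ht : t ∈ Ico 0 T') : sepIntegral lam r (R t) = timeIntegral T c t := by
  have hderiv : ∀ x ∈ Ico 0 T',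
      HasDerivAt (fun x => sepIntegral lam r (R x) - timeIntegral T c x) 0 x := by
    intro x hx
    have hxT : x < T := hx.2.trans_le hT'T
    have hRx := hR.mem_Ioc hc hneg hT'T hx
    refine (((hasDerivAt_sepIntegral hcont hneg hRx).comp x (hR.2 x hx).2).sub
      (hasDerivAt_timeIntegral hxT)).congr_deriv ?_
    rw [neg_mul, invGrowth_mul_radiusRate hxT hRx.1.ne' (hneg _ hRx).ne]
    ring
  have := constant_of_has_deriv_right_zero
    (fun x hx => (hderiv x ⟨hx.1, hx.2.trans_lt ht.2⟩).continuousAt.continuousWithinAt)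
    (fun x hx => (hderiv x ⟨hx.1, hx.2.trans ht.2⟩).hasDerivWithinAt) t ⟨ht.1, le_rfl⟩
  rw [hR.1, timeIntegral_zero, sepIntegral_self] at this
  linarith

theorem lt_of_forall_le_sepIntegral (hcont : ContinuousOn lam (Ioi 0)) (hT'0 : 0 < T')
    (hT'T : T' ≤ T) {M : ℝ} (hM : ∀ ρ ∈ Ioc 0 r, M ≤ sepIntegral lam r ρ) : T' < T := by
  refine hT'T.lt_of_ne fun hT' => ?_
  subst hT'
  have hIoo : ∀ᶠ t in 𝓝[<] T', t ∈ Ioo 0 T' := Ioo_mem_nhdsLT hT'0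
  obtain ⟨t, ht, htM⟩ :=
    (hIoo.and ((tendsto_timeIntegral_atBot hc).eventually_lt_atBot M)).exists
  have := hM _ (hR.mem_Ioc hc hneg hT'T (Ioo_subset_Ico_self ht))
  rw [hR.sepIntegral_eq hc hneg hcont hT'T (Ioo_subset_Ico_self ht)] at this
  linarith

theorem sepIntegral_le_timeIntegral (hcont : ContinuousOn lam (Ioi 0)) (hT'0 : 0 < T')
    (hT' : T' < T) {m : ℝ} (hm : 0 < m) (hmR : ∀ t ∈ Ico 0 T', m ≤ R t) :
    sepIntegral lam r m ≤ timeIntegral T c T' := by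
  have hmr : m ≤ r := hR.1 ▸ hmR 0 ⟨le_rfl, hT'0⟩
  refine ge_of_tendsto ((hasDerivAt_timeIntegral hT').continuousAt.tendsto.mono_left
    (nhdsWithin_le_nhds (s := Iio T'))) ?_
  filter_upwards [Ioo_mem_nhdsLT hT'0] with t ht
  have ht' := Ioo_subset_Ico_self ht
  rw [← hR.sepIntegral_eq hc hneg hcont hT'.le ht']
  exact ((strictMonoOn_sepIntegral hcont hneg).le_iff_le ⟨hm, hmr⟩
    (hR.mem_Ioc hc hneg hT'.le ht')).2 (hmR t ht')

theorem exists_extension (hcont : ContinuousOn lam (Ioi 0)) (hT'0 : 0 < T') (hT' : T' < T)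
    {m : ℝ} (hm : 0 < m) (hmR : ∀ t ∈ Ico 0 T', m ≤ R t) :
    ∃ T₂, T' < T₂ ∧ T₂ < T ∧ ∃ S, SolvesRadiusODE lam T c r T₂ S := by
  have hmr : m ≤ r := hR.1 ▸ hmR 0 ⟨le_rfl, hT'0⟩
  have hHm : sepIntegral lam r (m / 2) < sepIntegral lam r m :=
    strictMonoOn_sepIntegral hcont hneg ⟨half_pos hm, by linarith⟩ ⟨hm, hmr⟩ (half_lt_self hm)
  have hφ : ∀ᶠ s in 𝓝 T', sepIntegral lam r (m / 2) < timeIntegral T c s ∧ s < T :=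
    (continuousAt_const.eventually_lt (hasDerivAt_timeIntegral hT').continuousAt
      (hHm.trans_le (hR.sepIntegral_le_timeIntegral hc hneg hcont hT'0 hT' hm hmR))).and
      (eventually_lt_nhds hT')
  obtain ⟨T₂, ⟨hφT₂, hT₂⟩, hT'T₂⟩ :=
    ((hφ.filter_mono nhdsWithin_le_nhds).and (self_mem_nhdsWithin (s := Ioi T'))).exists
  obtain ⟨g, hleft, hg⟩ :=
    exists_solution_of_sepIntegral_lt hcont hneg hc (half_pos hm) (by linarith) hT₂ hφT₂
  have hgR : ∀ t ∈ Ioo 0 T', g (timeIntegral T c t) = R t := by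
    intro t ht
    have ht' := Ioo_subset_Ico_self ht
    rw [← hR.sepIntegral_eq hc hneg hcont hT'.le ht']
    exact hleft _ ⟨(half_lt_self hm).trans_le (hmR t ht'),
      hR.1 ▸ hR.strictAntiOn hc hneg hT'.le ⟨le_rfl, hT'0⟩ ht' ht.1⟩
  -- `R` near `0`, glued to `H⁻¹ ∘ φ`, which agrees with `R` on `(0, T')`.
  set S := fun t => if t < T' / 2 then R t else g (timeIntegral T c t)
  have hSg : ∀ t, 0 < t → S t = g (timeIntegral T c t) := by
    intro t ht
    by_cases h : t < T' / 2
    · simp only [S, if_pos h, hgR t ⟨ht, by linarith⟩]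
    · simp only [S, if_neg h]
  refine ⟨T₂, hT'T₂, hT₂, S, by simp [S, hT'0, hR.1], fun t ht => ?_⟩
  by_cases h : t < T' / 2
  · have hSR : S =ᶠ[𝓝 t] R := (eventually_lt_nhds h).mono fun s hs => if_pos hs
    rw [hSR.eq_of_nhds, hSR.hasDerivAt_iff]
    exact hR.2 t ⟨ht.1, by linarith⟩
  · have ht0 : 0 < t := by linarith
    have hSφ : S =ᶠ[𝓝 t] fun s => g (timeIntegral T c s) := (eventually_gt_nhds ht0).mono hSg
    rw [hSφ.eq_of_nhds, hSφ.hasDerivAt_iff]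
    exact hg t ⟨ht0, ht.2⟩

theorem tendsto_zero (hT'0 : 0 < T') (hT' : T' < T) (hsmall : ∀ m > 0, ∃ t ∈ Ico 0 T', R t < m) :
    Tendsto R (𝓝[<] T') (𝓝 0) := by
  refine tendsto_order.2 ⟨fun a ha => ?_, fun b hb => ?_⟩
  · filter_upwards [Ioo_mem_nhdsLT hT'0] with t ht
    exact ha.trans (hR.2 t (Ioo_subset_Ico_self ht)).1
  · obtain ⟨t₁, ht₁, hRt₁⟩ := hsmall b hb
    filter_upwards [Ioo_mem_nhdsLT ht₁.2] with t ht
    exact (hR.strictAntiOn hc hneg hT'.le ht₁ ⟨ht₁.1.trans ht.1.le, ht.2⟩ ht.1).trans hRt₁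

theorem exists_inv_pow_le (hcont : ContinuousOn lam (Ioi 0)) (hT : 0 < T) (hT'0 : 0 < T')
    (hT' : T' < T) {n : ℕ} (hO : (fun ρ => 1 / (ρ * (lam ρ + 1))) =O[𝓝[>] 0] fun ρ => ρ ^ n)
    (hlim : Tendsto R (𝓝[<] T') (𝓝 0)) :
    ∃ K > 0, ∃ t₀ ∈ Ico 0 T', ∀ t ∈ Ico t₀ T', (R t)⁻¹ ^ (n + 1) ≤ K / (T' - t) := by
  have hmem : ∀ t ∈ Ico 0 T', R t ∈ Ioc 0 r := fun t => hR.mem_Ioc hc hneg hT'.le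
  have hanti := hR.strictAntiOn hc hneg hT'.le
  obtain ⟨C, hC, δ, hδ, hCδ⟩ := exists_abs_invGrowth_le (hR.1 ▸ (hR.2 0 ⟨le_rfl, hT'0⟩).1) hO
  obtain ⟨t₀, hRt₀, ht₀⟩ := ((hlim.eventually_lt_const hδ.1).and (Ioo_mem_nhdsLT hT'0)).exists
  refine ⟨2 * T * C / ((n + 1) * c), by positivity, t₀, Ioo_subset_Ico_self ht₀, fun t ht => ?_⟩
  have ht' : t ∈ Ico 0 T' := ⟨ht₀.1.le.trans ht.1, ht.2⟩
  have hRt : R t ≤ δ := (hanti.antitoneOn (Ioo_subset_Ico_self ht₀) ht' ht.1).trans hRt₀.le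
  have hupper : timeIntegral T c t - timeIntegral T c T' ≤ C * R t ^ (n + 1) / (n + 1) := by
    refine le_of_tendsto (tendsto_const_nhds.sub ((hasDerivAt_timeIntegral hT').continuousAt
      |>.tendsto.mono_left (nhdsWithin_le_nhds (s := Iio T')))) ?_
    filter_upwards [Ioo_mem_nhdsLT ht.2] with s hs
    have hs' : s ∈ Ico 0 T' := ⟨ht'.1.trans hs.1.le, hs.2⟩
    rw [← hR.sepIntegral_eq hc hneg hcont hT'.le ht', ← hR.sepIntegral_eq hc hneg hcont hT'.le hs']
    exact sepIntegral_sub_le hcont hneg hC.le hδ.2 hCδ (hmem s hs').1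
      (hanti.antitoneOn ht' hs' hs.1.le) hRt
  have h := (le_timeIntegral_sub hT hc ht'.1 ht.2 hT').trans hupper
  have hRpos := (hmem t ht').1
  have hT't : 0 < T' - t := sub_pos.2 ht.2
  rw [div_le_div_iff₀ (by positivity) (by positivity)] at h
  rw [inv_pow, inv_le_comm₀ (by positivity) (by positivity), inv_div, div_le_iff₀ (by positivity),
    ← mul_div_assoc, le_div_iff₀ (by positivity)]
  linarith

end SolvesRadiusODE

/-- If `λ ≤ α < -1` on `(0,r]` and `1/(ρ(λ(ρ)+1)) = O(ρ^{2k-1})`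
as `ρ → 0⁺`, then the maximal solution of `R' = (c/(2(T-t)))(λ(R)+1)R`,
`R(0) = r`, satisfies `T' < T`, `R(t) → 0` as `t → T'`, and the type I bound
`R(t)^{-2k} ≤ C/(T'-t)` near `T'`. -/
theorem stmt9 (lam : ℝ → ℝ) (hcont : ContinuousOn lam (Set.Ioi 0))
    (k : ℕ) (hk : 1 ≤ k) (α : ℝ) (hα : α < -1)
    (T c r : ℝ) (hT : 0 < T) (hc : 0 < c) (hr : 0 < r)
    (hbound : ∀ ρ, 0 < ρ → ρ ≤ r → lam ρ ≤ α)
    (hO : (fun ρ => 1 / (ρ * (lam ρ + 1)))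
      =O[nhdsWithin 0 (Set.Ioi 0)] fun ρ => ρ ^ (2 * k - 1))
    (T' : ℝ) (hT'0 : 0 < T') (hT'T : T' ≤ T)
    (R : ℝ → ℝ) (hR0 : R 0 = r)
    (hRpos : ∀ t ∈ Set.Ico (0 : ℝ) T', 0 < R t)
    (hRode : ∀ t ∈ Set.Ico (0 : ℝ) T',
      HasDerivAt R (c / (2 * (T - t)) * (lam (R t) + 1) * R t) t)
    (hmax : ∀ (S : ℝ → ℝ) (T₂ : ℝ), T' < T₂ → T₂ ≤ T → S 0 = r →
      (∀ t ∈ Set.Ico (0 : ℝ) T₂, 0 < S t ∧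
        HasDerivAt S (c / (2 * (T - t)) * (lam (S t) + 1) * S t) t) → False) :
    T' < T
    ∧ Tendsto R (nhdsWithin T' (Set.Iio T')) (nhds 0)
    ∧ ∃ C > (0 : ℝ), ∃ t₀ ∈ Set.Ico (0 : ℝ) T',
        ∀ t ∈ Set.Ico t₀ T', (R t)⁻¹ ^ (2 * k) ≤ C / (T' - t) := by
  have hneg : ∀ s ∈ Ioc 0 r, lam s + 1 < 0 := fun s hs => by linarith [hbound s hs.1 hs.2]
  have hR : SolvesRadiusODE lam T c r T' R := ⟨hR0, fun t ht => ⟨hRpos t ht, hRode t ht⟩⟩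
  obtain ⟨M, hM⟩ := exists_forall_le_sepIntegral hcont hneg hr hO
  have hT' : T' < T := hR.lt_of_forall_le_sepIntegral hc hneg hcont hT'0 hT'T hM
  have hlim : Tendsto R (𝓝[<] T') (𝓝 0) := by
    refine hR.tendsto_zero hc hneg hT'0 hT' fun m hm => ?_
    by_contra! hmR
    obtain ⟨T₂, hT'T₂, hT₂, S, hS⟩ := hR.exists_extension hc hneg hcont hT'0 hT' hm hmR
    exact hmax S T₂ hT'T₂ hT₂.le hS.1 hS.2
  have hk' : 2 * k - 1 + 1 = 2 * k := by omega
  obtain ⟨K, hK, t₀, ht₀, hK'⟩ := hR.exists_inv_pow_le hc hneg hcont hT hT'0 hT' hO hlim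
  exact ⟨hT', hlim, K, hK, t₀, ht₀, hk' ▸ hK'⟩
end

section
/- Let λ : (0,∞) → ℝ be continuous with λ(ρ) ≥ α > -1 for ρ ∈ [r,∞) and with 1/(ρ(λ(ρ)+1)) = O(ρ^{-2k-1}) as ρ → ∞ for some integer k ≥ 1. Fix T > 0, c > 0 and r > 0. Let R : [0,T') → (0,∞) be the maximal solution of R'(t) = (c/(2(T-t)))·(λ(R(t)) + 1)·R(t), R(0) = r. Then R is strictly increasing, T' < T, R(t) → ∞ as t → T', and there is C > 0 with R(t)^{2k} ≤ C/(T'-t) for t close to T'. -/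
/-!
The equation separates: with `G ρ = ∫_r^ρ dσ / (σ (λ σ + 1))` (`radiusIntegral`) and
`H t = (c/2) log (T / (T - t))` (`timeIntegral`), every solution stays above `r` (where its speed
is positive) and satisfies `G (R t) = H t`. The decay of `1 / (ρ (λ ρ + 1))` makes `G` bounded by
`M := ∫_r^∞` (`totalWeight`), so the maximal solution is `G⁻¹ ∘ H` and lives exactly until the
time `T' < T` at which `H T' = M` (`blowupTime`), where `R → ∞`. For the rate,
`M - H t = ∫_{R t}^∞ = O(R t ^ (-2k))`, while `M - H t ≥ c (T' - t) / (2 T)` since `H` is convex.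
-/

open Filter Asymptotics Set MeasureTheory Topology

theorem StrictMono.hasDerivAt_invFun {f f' : ℝ → ℝ} (hf : StrictMono f)
    (hderiv : ∀ x, HasDerivAt f (f' x) x) (hf' : ∀ x, f' x ≠ 0) {y : ℝ}
    (hy : range f ∈ 𝓝 y) :
    HasDerivAt (Function.invFun f) (f' (Function.invFun f y))⁻¹ y := by
  have hleft : Function.LeftInverse (Function.invFun f) f :=
    Function.leftInverse_invFun hf.injective
  have hmono : StrictMonoOn (Function.invFun f) (range f) := by
    rintro _ ⟨x, rfl⟩ _ ⟨x', rfl⟩ h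
    rw [hleft x, hleft x']
    exact hf.lt_iff_lt.1 h
  have himage : Function.invFun f '' range f = univ :=
    eq_univ_of_forall fun x => ⟨f x, mem_range_self x, hleft x⟩
  refine HasDerivAt.of_local_left_inverse
    (hmono.continuousAt_of_image_mem_nhds hy (himage ▸ univ_mem)) (hderiv _) (hf' _) ?_
  filter_upwards [hy] with z hz using Function.invFun_eq hz

theorem Continuous.Ico_subset_range_of_tendsto {f : ℝ → ℝ} {M : ℝ} (hf : Continuous f)
    (hlim : Tendsto f atTop (𝓝 M)) (x : ℝ) : Ico (f x) M ⊆ range f := fun _ hy =>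
  mem_range_of_exists_le_of_exists_ge hf ⟨x, hy.1⟩
    (hlim.eventually (eventually_ge_nhds hy.2)).exists

theorem Monotone.tendsto_atTop_of_tendsto_comp {α : Type*} {f : ℝ → ℝ} {M : ℝ} {u : α → ℝ}
    {l : Filter α} (hf : Monotone f) (hlt : ∀ x, f x < M) (hu : Tendsto (f ∘ u) l (𝓝 M)) :
    Tendsto u l atTop :=
  tendsto_atTop.2 fun b =>
    (hu.eventually (eventually_gt_nhds (hlt b))).mono fun _ ht => (hf.reflect_lt ht).le

theorem exists_Ico_of_eventually_nhdsLT {p : ℝ → Prop} {a b : ℝ} (hab : a < b)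
    (h : ∀ᶠ t in 𝓝[<] b, p t) : ∃ t₀ ∈ Ico a b, ∀ t ∈ Ico t₀ b, p t := by
  obtain ⟨l, hl, hsub⟩ := mem_nhdsLT_iff_exists_Ico_subset.1 h
  exact ⟨max l a, ⟨le_max_right l a, max_lt hl hab⟩,
    fun t ht => hsub ⟨(le_max_left l a).trans ht.1, ht.2⟩⟩

theorem eventually_rpow_le_div_of_isBigO {u : ℝ → ℝ} {b p : ℝ}
    (hu : ∀ᶠ t in 𝓝[<] b, 0 < u t) (hO : (fun t => b - t) =O[𝓝[<] b] fun t => u t ^ (-p)) :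
    ∃ C > 0, ∀ᶠ t in 𝓝[<] b, u t ^ p ≤ C / (b - t) := by
  obtain ⟨C, hC, hCw⟩ := hO.exists_pos
  refine ⟨C, hC, ?_⟩
  filter_upwards [hCw.bound, hu, self_mem_nhdsWithin] with t ht hut (htb : t < b)
  have hpow : 0 < u t ^ p := Real.rpow_pos_of_pos hut p
  rw [Real.norm_of_nonneg (sub_pos.2 htb).le, Real.norm_of_nonneg (Real.rpow_nonneg hut.le _),
    Real.rpow_neg hut.le] at ht
  rw [le_div_iff₀ (sub_pos.2 htb)]
  calc u t ^ p * (b - t) ≤ u t ^ p * (C * (u t ^ p)⁻¹) := mul_le_mul_of_nonneg_left ht hpow.le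
    _ = C := by field_simp

section Primitive

variable {g : ℝ → ℝ} {a : ℝ}

theorem strictMono_intervalIntegral_of_pos (hg : Continuous g) (hpos : ∀ x, 0 < g x) :
    StrictMono fun x => ∫ σ in a..x, g σ :=
  strictMono_of_deriv_pos fun x => (hg.deriv_integral g a x).symm ▸ hpos x

theorem intervalIntegral_lt_integral_Ioi (hg : Continuous g) (hpos : ∀ x, 0 < g x)
    (hint : IntegrableOn g (Ioi a)) (x : ℝ) : ∫ σ in a..x, g σ < ∫ σ in Ioi a, g σ :=
  (strictMono_intervalIntegral_of_pos hg hpos (lt_add_one x)).trans_le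
    ((strictMono_intervalIntegral_of_pos hg hpos).monotone.ge_of_tendsto
      (intervalIntegral_tendsto_integral_Ioi a hint tendsto_id) (x + 1))

theorem integrableOn_Ioi_of_isBigO_rpow {s : ℝ} (hg : Continuous g) (hs : s < -1)
    (hO : g =O[atTop] fun x => x ^ s) : IntegrableOn g (Ioi a) :=
  ((hg.locallyIntegrable.locallyIntegrableOn _).integrableOn_of_isBigO_atTop hO
    (integrableAtFilter_rpow_atTop_iff.2 hs)).mono_set Ioi_subset_Ici_self

theorem isBigO_integral_Ioi_rpow {p : ℝ} (hp : 0 < p) (hO : g =O[atTop] fun x => x ^ (-(p + 1))) :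
    (fun x => ∫ ρ in Ioi x, g ρ) =O[atTop] fun x => x ^ (-p) := by
  obtain ⟨C, hC⟩ := hO.bound
  obtain ⟨x₀, hx₀⟩ := eventually_atTop.1 hC
  have hs : -(p + 1) < -1 := by linarith
  refine IsBigO.of_bound (C / p) ?_
  filter_upwards [eventually_ge_atTop (max x₀ 1)] with x hx
  have hx0 : 0 < x := one_pos.trans_le ((le_max_right x₀ 1).trans hx)
  calc ‖∫ ρ in Ioi x, g ρ‖ ≤ ∫ ρ in Ioi x, C * ρ ^ (-(p + 1)) := by
        refine norm_integral_le_of_norm_le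
          ((integrableOn_Ioi_rpow_of_lt hs hx0).const_mul C) ?_
        filter_upwards [ae_restrict_mem measurableSet_Ioi] with ρ hρ
        have := hx₀ ρ ((le_max_left x₀ 1).trans (hx.trans hρ.le))
        rwa [Real.norm_of_nonneg (Real.rpow_nonneg (hx0.trans hρ).le _)] at this
    _ = C / p * ‖x ^ (-p)‖ := by
        rw [integral_const_mul, integral_Ioi_rpow_of_lt hs hx0,
          Real.norm_of_nonneg (Real.rpow_nonneg hx0.le _), show -(p + 1) + 1 = -p by ring]
        field_simp

end Primitive

namespace RadiusODE

/-- `1 / (ρ (λ ρ + 1))`, frozen at its value at `r` for `ρ < r` so that it is continuous and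
positive on all of `ℝ`. -/
noncomputable def weight (lam : ℝ → ℝ) (r ρ : ℝ) : ℝ := 1 / (max ρ r * (lam (max ρ r) + 1))

noncomputable def radiusIntegral (lam : ℝ → ℝ) (r x : ℝ) : ℝ := ∫ ρ in r..x, weight lam r ρ

noncomputable def totalWeight (lam : ℝ → ℝ) (r : ℝ) : ℝ := ∫ ρ in Ioi r, weight lam r ρ

noncomputable def timeIntegral (T c t : ℝ) : ℝ := c / 2 * (Real.log T - Real.log (T - t))

noncomputable def blowupTime (T c m : ℝ) : ℝ := T * (1 - Real.exp (-(2 * m / c)))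

def IsSolutionOn (lam : ℝ → ℝ) (T c r : ℝ) (S : ℝ → ℝ) (T₂ : ℝ) : Prop :=
  S 0 = r ∧ ∀ t ∈ Ico (0 : ℝ) T₂,
    0 < S t ∧ HasDerivAt S (c / (2 * (T - t)) * (lam (S t) + 1) * S t) t

section Weight

variable {lam : ℝ → ℝ} {r ρ : ℝ}

theorem weight_of_le (h : r ≤ ρ) : weight lam r ρ = 1 / (ρ * (lam ρ + 1)) := by
  rw [weight, max_eq_left h]

theorem inv_weight_of_le (h : r ≤ ρ) : (weight lam r ρ)⁻¹ = ρ * (lam ρ + 1) := by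
  rw [weight_of_le h, one_div, inv_inv]

theorem weight_pos (hr : 0 < r) (hlam : ∀ ρ, r ≤ ρ → -1 < lam ρ) (ρ : ℝ) :
    0 < weight lam r ρ :=
  one_div_pos.2 (mul_pos (hr.trans_le (le_max_right ρ r))
    (by linarith [hlam _ (le_max_right ρ r)]))

theorem continuous_weight (hcont : ContinuousOn lam (Ioi 0)) (hr : 0 < r)
    (hlam : ∀ ρ, r ≤ ρ → -1 < lam ρ) : Continuous (weight lam r) := by
  have hmax : Continuous fun ρ : ℝ => max ρ r := continuous_id.max continuous_const
  have hlam' : Continuous fun ρ => lam (max ρ r) :=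
    hcont.comp_continuous hmax fun ρ => hr.trans_le (le_max_right ρ r)
  exact continuous_const.div (hmax.mul (hlam'.add continuous_const))
    fun ρ => (one_div_pos.1 (weight_pos hr hlam ρ)).ne'

theorem weight_isBigO_rpow {k : ℕ}
    (hO : (fun ρ => 1 / (ρ * (lam ρ + 1))) =O[atTop] fun ρ => (ρ ^ (2 * k + 1))⁻¹) :
    weight lam r =O[atTop] fun ρ => ρ ^ (-(((2 * k : ℕ) : ℝ) + 1)) := by
  refine hO.congr' ?_ ?_
  · filter_upwards [eventually_ge_atTop r] with ρ hρ using (weight_of_le hρ).symm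
  · filter_upwards [eventually_gt_atTop 0] with ρ hρ
    rw [Real.rpow_neg hρ.le, ← Nat.cast_succ, Real.rpow_natCast]

theorem hasDerivAt_radiusIntegral (hcont : ContinuousOn lam (Ioi 0)) (hr : 0 < r)
    (hlam : ∀ ρ, r ≤ ρ → -1 < lam ρ) (x : ℝ) :
    HasDerivAt (radiusIntegral lam r) (weight lam r x) x :=
  ((continuous_weight hcont hr hlam).integral_hasStrictDerivAt r x).hasDerivAt

theorem strictMono_radiusIntegral (hcont : ContinuousOn lam (Ioi 0)) (hr : 0 < r)
    (hlam : ∀ ρ, r ≤ ρ → -1 < lam ρ) : StrictMono (radiusIntegral lam r) :=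
  strictMono_intervalIntegral_of_pos (continuous_weight hcont hr hlam) (weight_pos hr hlam)

theorem radiusIntegral_self : radiusIntegral lam r r = 0 := intervalIntegral.integral_same

theorem radiusIntegral_lt_totalWeight (hcont : ContinuousOn lam (Ioi 0)) (hr : 0 < r)
    (hlam : ∀ ρ, r ≤ ρ → -1 < lam ρ) (hI : IntegrableOn (weight lam r) (Ioi r)) (x : ℝ) :
    radiusIntegral lam r x < totalWeight lam r :=
  intervalIntegral_lt_integral_Ioi (continuous_weight hcont hr hlam) (weight_pos hr hlam) hI x

theorem totalWeight_pos (hcont : ContinuousOn lam (Ioi 0)) (hr : 0 < r)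
    (hlam : ∀ ρ, r ≤ ρ → -1 < lam ρ) (hI : IntegrableOn (weight lam r) (Ioi r)) :
    0 < totalWeight lam r := by
  simpa only [radiusIntegral_self] using radiusIntegral_lt_totalWeight hcont hr hlam hI r

theorem totalWeight_sub_radiusIntegral (hI : IntegrableOn (weight lam r) (Ioi r)) {x : ℝ}
    (h : r ≤ x) : totalWeight lam r - radiusIntegral lam r x = ∫ ρ in Ioi x, weight lam r ρ := by
  rw [totalWeight, radiusIntegral, ← intervalIntegral.integral_Ioi_sub_Ioi hI h, sub_sub_cancel]

theorem range_radiusIntegral_mem_nhds (hcont : ContinuousOn lam (Ioi 0)) (hr : 0 < r)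
    (hlam : ∀ ρ, r ≤ ρ → -1 < lam ρ) (hI : IntegrableOn (weight lam r) (Ioi r)) {y : ℝ}
    (hy : y ∈ Ico 0 (totalWeight lam r)) : range (radiusIntegral lam r) ∈ 𝓝 y := by
  have hbelow : radiusIntegral lam r (r - 1) < 0 := by
    simpa only [radiusIntegral_self] using
      strictMono_radiusIntegral hcont hr hlam (sub_one_lt r)
  have hcontG : Continuous (radiusIntegral lam r) := continuous_iff_continuousAt.2
    fun x => (hasDerivAt_radiusIntegral hcont hr hlam x).continuousAt
  exact mem_of_superset (Ioo_mem_nhds (hbelow.trans_le hy.1) hy.2)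
    (Ioo_subset_Ico_self.trans (hcontG.Ico_subset_range_of_tendsto
      (intervalIntegral_tendsto_integral_Ioi r hI tendsto_id) (r - 1)))

end Weight


section Time

variable {T c t s m : ℝ}

theorem timeIntegral_zero : timeIntegral T c 0 = 0 := by simp [timeIntegral]

theorem hasDerivAt_timeIntegral (ht : t < T) :
    HasDerivAt (timeIntegral T c) (c / (2 * (T - t))) t := by
  have hTt : T - t ≠ 0 := (sub_pos.2 ht).ne'
  refine ((((hasDerivAt_id t).const_sub T).log hTt).const_sub (Real.log T)
    |>.const_mul (c / 2)).congr_deriv ?_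
  simp only [id]
  field_simp

theorem strictMonoOn_timeIntegral (hc : 0 < c) : StrictMonoOn (timeIntegral T c) (Iio T) := by
  intro x _ y (hy : y < T) hxy
  have : Real.log (T - y) < Real.log (T - x) := Real.log_lt_log (sub_pos.2 hy) (by linarith)
  unfold timeIntegral
  gcongr

theorem timeIntegral_blowupTime (hT : 0 < T) (hc : c ≠ 0) :
    timeIntegral T c (blowupTime T c m) = m := by
  rw [timeIntegral, blowupTime, show T - T * (1 - Real.exp (-(2 * m / c))) =
    T * Real.exp (-(2 * m / c)) by ring, Real.log_mul hT.ne' (Real.exp_ne_zero _), Real.log_exp]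
  field_simp
  ring

theorem blowupTime_lt (hT : 0 < T) : blowupTime T c m < T := by
  have := Real.exp_pos (-(2 * m / c))
  unfold blowupTime
  nlinarith

theorem blowupTime_pos (hT : 0 < T) (hc : 0 < c) (hm : 0 < m) : 0 < blowupTime T c m := by
  have : Real.exp (-(2 * m / c)) < 1 := Real.exp_lt_one_iff.2 (by simp; positivity)
  unfold blowupTime
  nlinarith

theorem timeIntegral_mem_Ico (hT : 0 < T) (hc : 0 < c) (ht : t ∈ Ico 0 (blowupTime T c m)) :
    timeIntegral T c t ∈ Ico 0 m := by
  have htT : t < T := ht.2.trans (blowupTime_lt hT)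
  constructor
  · simpa only [timeIntegral_zero] using
      (strictMonoOn_timeIntegral hc).monotoneOn (show (0 : ℝ) < T from hT) htT ht.1
  · simpa only [timeIntegral_blowupTime hT hc.ne'] using
      strictMonoOn_timeIntegral hc htT (blowupTime_lt hT) ht.2

theorem mul_sub_le_timeIntegral_sub (hc : 0 < c) (ht : 0 ≤ t) (hts : t ≤ s) (hs : s < T) :
    c / (2 * T) * (s - t) ≤ timeIntegral T c s - timeIntegral T c t := by
  have hTs : 0 < T - s := sub_pos.2 hs
  have hTt : 0 < T - t := by linarith
  have hlog := Real.one_sub_inv_le_log_of_pos (div_pos hTt hTs)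
  rw [Real.log_div hTt.ne' hTs.ne', inv_div] at hlog
  have hfrac : (s - t) / T ≤ (s - t) / (T - t) :=
    div_le_div_of_nonneg_left (by linarith) hTt (by linarith)
  have hsplit : (s - t) / (T - t) = 1 - (T - s) / (T - t) := by field_simp; ring
  calc c / (2 * T) * (s - t) = c / 2 * ((s - t) / T) := by ring
    _ ≤ c / 2 * (Real.log (T - t) - Real.log (T - s)) := by gcongr; linarith
    _ = timeIntegral T c s - timeIntegral T c t := by unfold timeIntegral; ring

end Time


section Solution

variable {lam : ℝ → ℝ} {T c r : ℝ} {S : ℝ → ℝ} {T₂ : ℝ}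

theorem speed_pos {t ρ : ℝ} (hc : 0 < c) (ht : t < T) (hlam : -1 < lam ρ) (hρ : 0 < ρ) :
    0 < c / (2 * (T - t)) * (lam ρ + 1) * ρ := by
  have : 0 < T - t := sub_pos.2 ht
  have : 0 < lam ρ + 1 := by linarith
  positivity

/-- The speed is positive wherever `S = r`, so `S` cannot cross below `r`. -/
theorem IsSolutionOn.initial_le (hS : IsSolutionOn lam T c r S T₂) (hc : 0 < c) (hT₂ : T₂ ≤ T)
    (hlam : ∀ ρ, r ≤ ρ → -1 < lam ρ) {t : ℝ} (ht : t ∈ Ico 0 T₂) : r ≤ S t := by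
  have hsub : Icc 0 t ⊆ Ico 0 T₂ := Icc_subset_Ico_right ht.2
  have hsub' : Ico 0 t ⊆ Ico 0 T₂ := Ico_subset_Icc_self.trans hsub
  have key := image_le_of_deriv_right_lt_deriv_boundary (f := fun s => -S s)
    (f' := fun x => -(c / (2 * (T - x)) * (lam (S x) + 1) * S x))
    (B := fun _ => -r) (B' := fun _ => 0)
    (fun x hx => (hS.2 x (hsub hx)).2.continuousAt.neg.continuousWithinAt)
    (fun x hx => (hS.2 x (hsub' hx)).2.neg.hasDerivWithinAt)
    (by simp only [hS.1, le_refl]) (fun _ => hasDerivAt_const _ _) ?_ (right_mem_Icc.2 ht.1)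
  · simpa only [neg_le_neg_iff] using key
  · intro x hx hSx
    rw [neg_lt_zero]
    exact speed_pos hc ((hsub' hx).2.trans_le hT₂) (hlam _ (neg_inj.1 hSx).ge) (hS.2 x (hsub' hx)).1

theorem IsSolutionOn.strictMonoOn (hS : IsSolutionOn lam T c r S T₂) (hc : 0 < c)
    (hT₂ : T₂ ≤ T) (hlam : ∀ ρ, r ≤ ρ → -1 < lam ρ) : StrictMonoOn S (Ico 0 T₂) := by
  refine strictMonoOn_of_deriv_pos (convex_Ico 0 T₂)
    (fun x hx => (hS.2 x hx).2.continuousAt.continuousWithinAt) fun x hx => ?_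
  rw [interior_Ico] at hx
  have hx' := Ioo_subset_Ico_self hx
  rw [(hS.2 x hx').2.deriv]
  exact speed_pos hc (hx.2.trans_le hT₂) (hlam _ (hS.initial_le hc hT₂ hlam hx')) (hS.2 x hx').1

theorem IsSolutionOn.radiusIntegral_eq (hS : IsSolutionOn lam T c r S T₂)
    (hcont : ContinuousOn lam (Ioi 0)) (hr : 0 < r) (hlam : ∀ ρ, r ≤ ρ → -1 < lam ρ)
    (hc : 0 < c) (hT₂ : T₂ ≤ T) {t : ℝ} (ht : t ∈ Ico 0 T₂) :
    radiusIntegral lam r (S t) = timeIntegral T c t := by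
  have hsub : Icc 0 t ⊆ Ico 0 T₂ := Icc_subset_Ico_right ht.2
  have hradius : ∀ x ∈ Icc 0 t,
      HasDerivAt (fun s => radiusIntegral lam r (S s)) (c / (2 * (T - x))) x := by
    intro x hx
    have hx := hsub hx
    have hlamx := hlam _ (hS.initial_le hc hT₂ hlam hx)
    have hTx : T - x ≠ 0 := (sub_pos.2 (hx.2.trans_le hT₂)).ne'
    refine ((hasDerivAt_radiusIntegral hcont hr hlam (S x)).comp x (hS.2 x hx).2).congr_deriv ?_
    rw [← inv_inv (weight lam r (S x)), inv_weight_of_le (hS.initial_le hc hT₂ hlam hx)]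
    have : lam (S x) + 1 ≠ 0 := by linarith
    field_simp [(hS.2 x hx).1.ne']
  have htime : ∀ x ∈ Icc 0 t, HasDerivAt (timeIntegral T c) (c / (2 * (T - x))) x :=
    fun x hx => hasDerivAt_timeIntegral ((hsub hx).2.trans_le hT₂)
  exact eq_of_has_deriv_right_eq
    (fun x hx => (hradius x (Ico_subset_Icc_self hx)).hasDerivWithinAt)
    (fun x hx => (htime x (Ico_subset_Icc_self hx)).hasDerivWithinAt)
    (fun x hx => (hradius x hx).continuousAt.continuousWithinAt)
    (fun x hx => (htime x hx).continuousAt.continuousWithinAt)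
    (by rw [hS.1, radiusIntegral_self, timeIntegral_zero]) t (right_mem_Icc.2 ht.1)

theorem isSolutionOn_blowupTime (hcont : ContinuousOn lam (Ioi 0)) (hr : 0 < r)
    (hlam : ∀ ρ, r ≤ ρ → -1 < lam ρ) (hT : 0 < T) (hc : 0 < c)
    (hI : IntegrableOn (weight lam r) (Ioi r)) :
    IsSolutionOn lam T c r (fun t => Function.invFun (radiusIntegral lam r) (timeIntegral T c t))
      (blowupTime T c (totalWeight lam r)) := by
  have hG := strictMono_radiusIntegral hcont hr hlam
  refine ⟨?_, fun t ht => ?_⟩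
  · change Function.invFun _ (timeIntegral T c 0) = r
    rw [timeIntegral_zero, ← radiusIntegral_self (lam := lam) (r := r),
      Function.leftInverse_invFun hG.injective]
  have hH := timeIntegral_mem_Ico hT hc ht
  have hnhds := range_radiusIntegral_mem_nhds hcont hr hlam hI hH
  have hGS : radiusIntegral lam r (Function.invFun (radiusIntegral lam r) (timeIntegral T c t))
      = timeIntegral T c t := Function.invFun_eq (mem_of_mem_nhds hnhds : _ ∈ range _)
  have hSr : r ≤ Function.invFun (radiusIntegral lam r) (timeIntegral T c t) :=
    hG.le_iff_le.1 (by rw [hGS, radiusIntegral_self]; exact hH.1)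
  refine ⟨hr.trans_le hSr, ?_⟩
  refine ((hG.hasDerivAt_invFun (hasDerivAt_radiusIntegral hcont hr hlam)
    (fun x => (weight_pos hr hlam x).ne') hnhds).comp t
    (hasDerivAt_timeIntegral (ht.2.trans (blowupTime_lt hT)))).congr_deriv ?_
  rw [inv_weight_of_le hSr]
  ring

theorem IsSolutionOn.eq_blowupTime (hS : IsSolutionOn lam T c r S T₂)
    (hcont : ContinuousOn lam (Ioi 0)) (hr : 0 < r) (hlam : ∀ ρ, r ≤ ρ → -1 < lam ρ)
    (hT : 0 < T) (hc : 0 < c) (hT₂ : T₂ ≤ T) (hI : IntegrableOn (weight lam r) (Ioi r))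
    (hmax : ∀ S' T₃, T₂ < T₃ → T₃ ≤ T → IsSolutionOn lam T c r S' T₃ → False) :
    T₂ = blowupTime T c (totalWeight lam r) := by
  refine le_antisymm (not_lt.1 fun h => ?_) (not_lt.1 fun h => hmax _ _ h (blowupTime_lt hT).le
    (isSolutionOn_blowupTime hcont hr hlam hT hc hI))
  have hmem : blowupTime T c (totalWeight lam r) ∈ Ico 0 T₂ :=
    ⟨(blowupTime_pos hT hc (totalWeight_pos hcont hr hlam hI)).le, h⟩
  have := radiusIntegral_lt_totalWeight hcont hr hlam hI (S (blowupTime T c (totalWeight lam r)))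
  rw [hS.radiusIntegral_eq hcont hr hlam hc hT₂ hmem, timeIntegral_blowupTime hT hc.ne'] at this
  exact lt_irrefl _ this

theorem IsSolutionOn.tendsto_atTop (hS : IsSolutionOn lam T c r S T₂)
    (hcont : ContinuousOn lam (Ioi 0)) (hr : 0 < r) (hlam : ∀ ρ, r ≤ ρ → -1 < lam ρ)
    (hT : 0 < T) (hc : 0 < c) (hI : IntegrableOn (weight lam r) (Ioi r))
    (hT₂ : T₂ = blowupTime T c (totalWeight lam r)) : Tendsto S (𝓝[<] T₂) atTop := by
  have hT₂T : T₂ < T := hT₂ ▸ blowupTime_lt hT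
  have h0 : 0 < T₂ := hT₂ ▸ blowupTime_pos hT hc (totalWeight_pos hcont hr hlam hI)
  have hH : Tendsto (timeIntegral T c) (𝓝[<] T₂) (𝓝 (totalWeight lam r)) := by
    rw [← timeIntegral_blowupTime hT hc.ne' (m := totalWeight lam r), ← hT₂]
    exact (hasDerivAt_timeIntegral hT₂T).continuousAt.continuousWithinAt.tendsto
  refine (strictMono_radiusIntegral hcont hr hlam).monotone.tendsto_atTop_of_tendsto_comp
    (radiusIntegral_lt_totalWeight hcont hr hlam hI) (hH.congr' ?_)
  filter_upwards [Ioo_mem_nhdsLT h0] with t ht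
  exact (hS.radiusIntegral_eq hcont hr hlam hc hT₂T.le (Ioo_subset_Ico_self ht)).symm

theorem IsSolutionOn.sub_le_integral_Ioi (hS : IsSolutionOn lam T c r S T₂)
    (hcont : ContinuousOn lam (Ioi 0)) (hr : 0 < r) (hlam : ∀ ρ, r ≤ ρ → -1 < lam ρ)
    (hT : 0 < T) (hc : 0 < c) (hI : IntegrableOn (weight lam r) (Ioi r))
    (hT₂ : T₂ = blowupTime T c (totalWeight lam r)) {t : ℝ} (ht : t ∈ Ico 0 T₂) :
    T₂ - t ≤ 2 * T / c * ∫ ρ in Ioi (S t), weight lam r ρ := by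
  have hT₂T : T₂ < T := hT₂ ▸ blowupTime_lt hT
  rw [← totalWeight_sub_radiusIntegral hI (hS.initial_le hc hT₂T.le hlam ht),
    hS.radiusIntegral_eq hcont hr hlam hc hT₂T.le ht,
    ← timeIntegral_blowupTime hT hc.ne' (m := totalWeight lam r), ← hT₂]
  calc T₂ - t = 2 * T / c * (c / (2 * T) * (T₂ - t)) := by field_simp
    _ ≤ _ := by gcongr; exact mul_sub_le_timeIntegral_sub hc ht.1 ht.2.le hT₂T

theorem IsSolutionOn.eventually_rpow_le (hS : IsSolutionOn lam T c r S T₂)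
    (hcont : ContinuousOn lam (Ioi 0)) (hr : 0 < r) (hlam : ∀ ρ, r ≤ ρ → -1 < lam ρ)
    (hT : 0 < T) (hc : 0 < c) (hI : IntegrableOn (weight lam r) (Ioi r))
    (hT₂ : T₂ = blowupTime T c (totalWeight lam r)) {p : ℝ} (hp : 0 < p)
    (hO : weight lam r =O[atTop] fun ρ => ρ ^ (-(p + 1))) :
    ∃ C > 0, ∀ᶠ t in 𝓝[<] T₂, S t ^ p ≤ C / (T₂ - t) := by
  have h0 : 0 < T₂ := hT₂ ▸ blowupTime_pos hT hc (totalWeight_pos hcont hr hlam hI)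
  have hIco : ∀ᶠ t in 𝓝[<] T₂, t ∈ Ico 0 T₂ :=
    mem_of_superset (Ioo_mem_nhdsLT h0) Ioo_subset_Ico_self
  refine eventually_rpow_le_div_of_isBigO (hIco.mono fun t ht => (hS.2 t ht).1) ?_
  refine IsBigO.trans ?_ ((isBigO_integral_Ioi_rpow hp hO).comp_tendsto
    (hS.tendsto_atTop hcont hr hlam hT hc hI hT₂))
  refine IsBigO.of_bound (2 * T / c) ?_
  filter_upwards [hIco] with t ht
  rw [Real.norm_of_nonneg (sub_nonneg.2 ht.2.le)]
  exact (hS.sub_le_integral_Ioi hcont hr hlam hT hc hI hT₂ ht).trans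
    (mul_le_mul_of_nonneg_left (Real.le_norm_self _) (by positivity))

end Solution

end RadiusODE

open RadiusODE

theorem stmt10_general (lam : ℝ → ℝ) (hcont : ContinuousOn lam (Set.Ioi 0))
    (k : ℕ) (hk : 1 ≤ k) (α : ℝ) (hα : -1 < α)
    (T c r : ℝ) (hT : 0 < T) (hc : 0 < c) (hr : 0 < r)
    (hbound : ∀ ρ, r ≤ ρ → α ≤ lam ρ)
    (hO : (fun ρ => 1 / (ρ * (lam ρ + 1))) =O[atTop] fun ρ => (ρ ^ (2 * k + 1))⁻¹)
    (T' : ℝ) (hT'T : T' ≤ T)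
    (R : ℝ → ℝ) (hR0 : R 0 = r)
    (hRpos : ∀ t ∈ Set.Ico (0 : ℝ) T', 0 < R t)
    (hRode : ∀ t ∈ Set.Ico (0 : ℝ) T',
      HasDerivAt R (c / (2 * (T - t)) * (lam (R t) + 1) * R t) t)
    (hmax : ∀ (S : ℝ → ℝ) (T₂ : ℝ), T' < T₂ → T₂ ≤ T → S 0 = r →
      (∀ t ∈ Set.Ico (0 : ℝ) T₂, 0 < S t ∧
        HasDerivAt S (c / (2 * (T - t)) * (lam (S t) + 1) * S t) t) → False) :
    StrictMonoOn R (Set.Ico 0 T')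
    ∧ T' < T
    ∧ Tendsto R (nhdsWithin T' (Set.Iio T')) atTop
    ∧ ∃ C > (0 : ℝ), ∃ t₀ ∈ Set.Ico (0 : ℝ) T',
        ∀ t ∈ Set.Ico t₀ T', (R t) ^ (2 * k) ≤ C / (T' - t) := by
  have hlam : ∀ ρ, r ≤ ρ → -1 < lam ρ := fun ρ hρ => hα.trans_le (hbound ρ hρ)
  have hR : IsSolutionOn lam T c r R T' := ⟨hR0, fun t ht => ⟨hRpos t ht, hRode t ht⟩⟩
  have hp : (0 : ℝ) < ((2 * k : ℕ) : ℝ) := by exact_mod_cast (by omega : 0 < 2 * k)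
  have hweight : weight lam r =O[atTop] _ := weight_isBigO_rpow hO
  have hI : IntegrableOn (weight lam r) (Ioi r) :=
    integrableOn_Ioi_of_isBigO_rpow (continuous_weight hcont hr hlam) (by linarith) hweight
  have hT' : T' = blowupTime T c (totalWeight lam r) :=
    hR.eq_blowupTime hcont hr hlam hT hc hT'T hI fun S T₂ h₁ h₂ hS => hmax S T₂ h₁ h₂ hS.1 hS.2
  obtain ⟨C, hC, hrate⟩ := hR.eventually_rpow_le hcont hr hlam hT hc hI hT' hp hweight
  obtain ⟨t₀, ht₀, hrate⟩ := exists_Ico_of_eventually_nhdsLT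
    (hT' ▸ blowupTime_pos hT hc (totalWeight_pos hcont hr hlam hI)) hrate
  refine ⟨hR.strictMonoOn hc hT'T hlam, hT' ▸ blowupTime_lt hT,
    hR.tendsto_atTop hcont hr hlam hT hc hI hT', C, hC, t₀, ht₀, fun t ht => ?_⟩
  simpa only [Real.rpow_natCast] using hrate t ht

/-- If `λ ≥ α > -1` on `[r,∞)` and `1/(ρ(λ(ρ)+1)) = O(ρ^{-2k-1})`
as `ρ → ∞`, then the maximal solution of `R' = (c/(2(T-t)))(λ(R)+1)R`,
`R(0) = r`, is strictly increasing, `T' < T`, `R(t) → ∞` as `t → T'`, and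
`R(t)^{2k} ≤ C/(T'-t)` near `T'`. -/
theorem stmt10 (lam : ℝ → ℝ) (hcont : ContinuousOn lam (Set.Ioi 0))
    (k : ℕ) (hk : 1 ≤ k) (α : ℝ) (hα : -1 < α)
    (T c r : ℝ) (hT : 0 < T) (hc : 0 < c) (hr : 0 < r)
    (hbound : ∀ ρ, r ≤ ρ → α ≤ lam ρ)
    (hO : (fun ρ => 1 / (ρ * (lam ρ + 1))) =O[atTop] fun ρ => (ρ ^ (2 * k + 1))⁻¹)
    (T' : ℝ) (hT'0 : 0 < T') (hT'T : T' ≤ T)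
    (R : ℝ → ℝ) (hR0 : R 0 = r)
    (hRpos : ∀ t ∈ Set.Ico (0 : ℝ) T', 0 < R t)
    (hRode : ∀ t ∈ Set.Ico (0 : ℝ) T',
      HasDerivAt R (c / (2 * (T - t)) * (lam (R t) + 1) * R t) t)
    (hmax : ∀ (S : ℝ → ℝ) (T₂ : ℝ), T' < T₂ → T₂ ≤ T → S 0 = r →
      (∀ t ∈ Set.Ico (0 : ℝ) T₂, 0 < S t ∧
        HasDerivAt S (c / (2 * (T - t)) * (lam (S t) + 1) * S t) t) → False) :
    StrictMonoOn R (Set.Ico 0 T')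
    ∧ T' < T
    ∧ Tendsto R (nhdsWithin T' (Set.Iio T')) atTop
    ∧ ∃ C > (0 : ℝ), ∃ t₀ ∈ Set.Ico (0 : ℝ) T',
        ∀ t ∈ Set.Ico t₀ T', (R t) ^ (2 * k) ≤ C / (T' - t) :=
  stmt10_general lam hcont k hk α hα T c r hT hc hr hbound hO T' hT'T R hR0 hRpos hRode hmax
end

section
/- Let λ : (0,∞) → ℝ be continuous with λ(ρ) ≤ α < 0 for all ρ ∈ (0,r] and 1/(ρ·λ(ρ)) = O(ρ^{2k-1}) as ρ → 0 for some integer k ≥ 1. Fix c > 0 and 0 < r. Let h : [0,T') → (0,∞) be the maximal solution of h'(t)/h(t) = c·λ(h(t)·r), h(0) = 1. Then h is strictly decreasing, T' < ∞, h(t) → 0 as t → T', and there is C > 0 with h(t)^{-2k} ≤ C/(T'-t) near T'. -/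
/-!
The equation `h' = F h` with `F x = c λ(x r) x` is autonomous, so it is integrated by the travel
time `G x = ∫_{1}^{x} 1/F`: every solution satisfies `G (h t) = t`, and conversely the inverse of
`G` is a solution. Since `F < 0` on `(0, 1]`, the solution decreases, and it decreases to `0`:
if it stopped at a positive level `L`, then `T' = G L`, and the inverse of `G`, which exists beyond
`G L`, would extend the solution past `T'`. Finally `T' - t = ∫_0^{h t} 1/|F|`, and the bound
`1/|F(s)| = O(s^{2k-1})` gives `T' - t = O(h(t)^{2k})`.
-/

open Filter Asymptotics Set Topology

def IsSolutionOn (F : ℝ → ℝ) (I : Set ℝ) (x : ℝ → ℝ) (T : ℝ) : Prop :=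
  ∀ t ∈ Ico 0 T, x t ∈ I ∧ HasDerivAt x (F (x t)) t

noncomputable def travelTime (F : ℝ → ℝ) (x₀ x : ℝ) : ℝ := ∫ s in x₀..x, (F s)⁻¹

theorem travelTime_self (F : ℝ → ℝ) (x₀ : ℝ) : travelTime F x₀ x₀ = 0 :=
  intervalIntegral.integral_same

theorem norm_integral_le_of_norm_le_mul_pow {g : ℝ → ℝ} {u v C : ℝ} {m : ℕ} (hu : 0 ≤ u)
    (huv : u ≤ v) (hC : 0 ≤ C) (hg : ∀ s ∈ Ioc u v, ‖g s‖ ≤ C * s ^ m) :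
    ‖∫ s in u..v, g s‖ ≤ C / (m + 1) * v ^ (m + 1) :=
  calc ‖∫ s in u..v, g s‖ ≤ ∫ s in u..v, C * s ^ m :=
        intervalIntegral.norm_integral_le_of_norm_le huv (MeasureTheory.ae_of_all _ hg)
          ((by fun_prop : Continuous fun s : ℝ => C * s ^ m).intervalIntegrable _ _)
    _ = C / (m + 1) * (v ^ (m + 1) - u ^ (m + 1)) := by
        rw [intervalIntegral.integral_const_mul, integral_pow]; ring
    _ ≤ C / (m + 1) * v ^ (m + 1) := by
        gcongr
        exact sub_le_self _ (pow_nonneg hu _)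

theorem exists_gt_forall_neg_of_continuousAt {F : ℝ → ℝ} {a x₀ : ℝ} (hF : ContinuousAt F x₀)
    (hax : a < x₀) (hneg : ∀ x ∈ Ioc a x₀, F x < 0) : ∃ b > x₀, ∀ x ∈ Ioo a b, F x < 0 := by
  obtain ⟨b, hx₀b, hb⟩ := exists_Ico_subset_of_mem_nhds
    (hF.eventually (gt_mem_nhds (hneg x₀ ⟨hax, le_rfl⟩))) ⟨x₀ + 1, lt_add_one x₀⟩
  refine ⟨b, hx₀b, fun x hx => ?_⟩
  rcases le_or_gt x x₀ with hxx₀ | hx₀x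
  · exact hneg x ⟨hx.1, hxx₀⟩
  · exact hb ⟨hx₀x.le, hx.2⟩

theorem continuousAt_invFunOn_of_strictAntiOn {G : ℝ → ℝ} {p q y : ℝ} (hpq : p ≤ q)
    (hGc : ContinuousOn G (Icc p q)) (hG : StrictAntiOn G (Icc p q))
    (hy : y ∈ Ioo (G q) (G p)) : ContinuousAt (Function.invFunOn G (Icc p q)) y := by
  set S := Function.invFunOn G (Icc p q)
  have hsurj : SurjOn G (Icc p q) (Icc (G q) (G p)) := intermediate_value_Icc' hpq hGc
  have hS_anti : StrictAntiOn S (Icc (G q) (G p)) := by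
    intro y₁ hy₁ y₂ hy₂ hlt
    refine lt_of_not_ge fun hle => hlt.not_ge ?_
    rw [← hsurj.rightInvOn_invFunOn hy₁, ← hsurj.rightInvOn_invFunOn hy₂]
    exact hG.antitoneOn (hsurj.mapsTo_invFunOn hy₁) (hsurj.mapsTo_invFunOn hy₂) hle
  have hSy : S y ∈ Ioo p q := by
    have hmem : S y ∈ Icc p q := hsurj.mapsTo_invFunOn (Ioo_subset_Icc_self hy)
    have hGS : G (S y) = y := hsurj.rightInvOn_invFunOn (Ioo_subset_Icc_self hy)
    refine ⟨hmem.1.lt_of_ne ?_, hmem.2.lt_of_ne ?_⟩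
    · rintro hp; rw [← hp] at hGS; exact hy.2.ne hGS.symm
    · rintro hq; rw [hq] at hGS; exact hy.1.ne hGS
  have himage : Ioo p q ⊆ S '' Icc (G q) (G p) := fun x hx =>
    ⟨G x, ⟨hG.antitoneOn (Ioo_subset_Icc_self hx) ⟨hpq, le_rfl⟩ hx.2.le,
      hG.antitoneOn ⟨le_rfl, hpq⟩ (Ioo_subset_Icc_self hx) hx.1.le⟩,
      hG.injOn.leftInvOn_invFunOn (Ioo_subset_Icc_self hx)⟩
  exact hS_anti.dual_right.continuousAt_of_image_mem_nhds (Icc_mem_nhds hy.1 hy.2)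
    (show S '' Icc (G q) (G p) ∈ 𝓝 (S y) from mem_of_superset (Ioo_mem_nhds hSy.1 hSy.2) himage)

section Autonomous

variable {F : ℝ → ℝ} {a b : ℝ}

theorem intervalIntegrable_inv_of_mem_Ioo (hF : ContinuousOn F (Ioo a b))
    (hF0 : ∀ x ∈ Ioo a b, F x ≠ 0) {x y : ℝ} (hx : x ∈ Ioo a b) (hy : y ∈ Ioo a b) :
    IntervalIntegrable (fun s => (F s)⁻¹) MeasureTheory.volume x y :=
  ((hF.inv₀ hF0).mono (ordConnected_Ioo.uIcc_subset hx hy)).intervalIntegrable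

theorem hasDerivAt_travelTime (hF : ContinuousOn F (Ioo a b)) (hF0 : ∀ x ∈ Ioo a b, F x ≠ 0)
    {x₀ x : ℝ} (hx₀ : x₀ ∈ Ioo a b) (hx : x ∈ Ioo a b) :
    HasDerivAt (travelTime F x₀) (F x)⁻¹ x :=
  intervalIntegral.integral_hasDerivAt_right (intervalIntegrable_inv_of_mem_Ioo hF hF0 hx₀ hx)
    ((hF.inv₀ hF0).stronglyMeasurableAtFilter isOpen_Ioo x hx)
    ((hF.inv₀ hF0).continuousAt (isOpen_Ioo.mem_nhds hx))

theorem travelTime_sub_travelTime (hF : ContinuousOn F (Ioo a b))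
    (hF0 : ∀ x ∈ Ioo a b, F x ≠ 0) {x₀ x y : ℝ} (hx₀ : x₀ ∈ Ioo a b) (hx : x ∈ Ioo a b)
    (hy : y ∈ Ioo a b) : travelTime F x₀ y - travelTime F x₀ x = ∫ s in x..y, (F s)⁻¹ :=
  intervalIntegral.integral_interval_sub_left (intervalIntegrable_inv_of_mem_Ioo hF hF0 hx₀ hy)
    (intervalIntegrable_inv_of_mem_Ioo hF hF0 hx₀ hx)

theorem le_initial_of_hasDerivAt {h : ℝ → ℝ} {T : ℝ}
    (hd : ∀ t ∈ Ico 0 T, HasDerivAt h (F (h t)) t) (hneg : F (h 0) < 0) :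
    ∀ t ∈ Ico 0 T, h t ≤ h 0 := fun _ ht =>
  image_le_of_deriv_right_lt_deriv_boundary' (B := fun _ => h 0) (B' := fun _ => 0)
    (fun s hs => (hd s ⟨hs.1, hs.2.trans_lt ht.2⟩).continuousAt.continuousWithinAt)
    (fun s hs => (hd s ⟨hs.1, hs.2.trans ht.2⟩).hasDerivWithinAt) le_rfl continuousOn_const
    (fun _ _ => hasDerivWithinAt_const _ _ _) (fun _ _ hs => hs ▸ hneg) ⟨ht.1, le_rfl⟩

theorem strictAntiOn_of_isSolutionOn {I : Set ℝ} {h : ℝ → ℝ} {T : ℝ}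
    (hneg : ∀ x ∈ I, F x < 0) (hsol : IsSolutionOn F I h T) : StrictAntiOn h (Ico 0 T) :=
  strictAntiOn_of_hasDerivWithinAt_neg (convex_Ico 0 T)
    (fun t ht => (hsol t ht).2.continuousAt.continuousWithinAt)
    (fun t ht => (hsol t (interior_subset ht)).2.hasDerivWithinAt)
    (fun t ht => hneg _ (hsol t (interior_subset ht)).1)

theorem travelTime_of_isSolutionOn (hF : ContinuousOn F (Ioo a b))
    (hF0 : ∀ x ∈ Ioo a b, F x ≠ 0) {h : ℝ → ℝ} {T : ℝ} (hsol : IsSolutionOn F (Ioo a b) h T)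
    {t : ℝ} (ht : t ∈ Ico 0 T) : travelTime F (h 0) (h t) = t := by
  have h0 : h 0 ∈ Ioo a b := (hsol 0 ⟨le_rfl, ht.1.trans_lt ht.2⟩).1
  have hderiv : ∀ s ∈ Ico 0 T, HasDerivAt (fun s => travelTime F (h 0) (h s)) 1 s := by
    intro s hs
    have := (hasDerivAt_travelTime hF hF0 h0 (hsol s hs).1).comp s (hsol s hs).2
    rwa [inv_mul_cancel₀ (hF0 _ (hsol s hs).1)] at this
  refine eq_of_has_deriv_right_eq (f' := fun _ => 1) (g := id)
    (fun s hs => (hderiv s ⟨hs.1, hs.2.trans ht.2⟩).hasDerivWithinAt)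
    (fun s _ => (hasDerivAt_id s).hasDerivWithinAt)
    (fun s hs => (hderiv s ⟨hs.1, hs.2.trans_lt ht.2⟩).continuousAt.continuousWithinAt)
    continuousOn_id (travelTime_self F _) t ⟨ht.1, le_rfl⟩

theorem strictAntiOn_of_hasDerivAt_inv {G : ℝ → ℝ} (hG : ∀ x ∈ Ioo a b, HasDerivAt G (F x)⁻¹ x)
    (hneg : ∀ x ∈ Ioo a b, F x < 0) : StrictAntiOn G (Ioo a b) :=
  strictAntiOn_of_hasDerivWithinAt_neg (convex_Ioo a b)
    (fun x hx => (hG x hx).continuousAt.continuousWithinAt)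
    (fun x hx => (hG x (interior_subset hx)).hasDerivWithinAt)
    (fun x hx => inv_lt_zero.2 (hneg x (interior_subset hx)))

theorem exists_isSolutionOn_of_hasDerivAt_inv {G : ℝ → ℝ}
    (hG : ∀ x ∈ Ioo a b, HasDerivAt G (F x)⁻¹ x) (hneg : ∀ x ∈ Ioo a b, F x < 0) {x₀ p : ℝ}
    (hx₀ : x₀ ∈ Ioo a b) (hG0 : G x₀ = 0) (hp : p ∈ Ioo a x₀) :
    ∃ S : ℝ → ℝ, S 0 = x₀ ∧ IsSolutionOn F (Ioo a b) S (G p) := by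
  obtain ⟨q, hx₀q, hqb⟩ := exists_between hx₀.2
  have hsub : Icc p q ⊆ Ioo a b := Icc_subset_Ioo hp.1 hqb
  have hGc : ContinuousOn G (Icc p q) := fun x hx =>
    (hG x (hsub hx)).continuousAt.continuousWithinAt
  have hG_anti : StrictAntiOn G (Icc p q) := (strictAntiOn_of_hasDerivAt_inv hG hneg).mono hsub
  have hx₀pq : x₀ ∈ Icc p q := ⟨hp.2.le, hx₀q.le⟩
  have hsurj : SurjOn G (Icc p q) (Icc (G q) (G p)) :=
    intermediate_value_Icc' (hp.2.trans hx₀q).le hGc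
  refine ⟨Function.invFunOn G (Icc p q), ?_, fun t ht => ?_⟩
  · simpa [hG0] using hG_anti.injOn.leftInvOn_invFunOn hx₀pq
  have hGq : G q < 0 := hG0 ▸ hG_anti hx₀pq ⟨(hp.2.trans hx₀q).le, le_rfl⟩ hx₀q
  have ht' : t ∈ Ioo (G q) (G p) := ⟨hGq.trans_le ht.1, ht.2⟩
  have hSt : Function.invFunOn G (Icc p q) t ∈ Ioo a b :=
    hsub (hsurj.mapsTo_invFunOn (Ioo_subset_Icc_self ht'))
  have hright : ∀ᶠ y in 𝓝 t, G (Function.invFunOn G (Icc p q) y) = y :=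
    eventually_of_mem (Ioo_mem_nhds ht'.1 ht'.2) fun y hy =>
      hsurj.rightInvOn_invFunOn (Ioo_subset_Icc_self hy)
  refine ⟨hSt, ?_⟩
  simpa using (hG _ hSt).of_local_left_inverse
    (continuousAt_invFunOn_of_strictAntiOn (hp.2.trans hx₀q).le hGc hG_anti ht')
    (inv_ne_zero (hneg _ hSt).ne) hright

theorem tendsto_of_isSolutionOn_of_maximal (hF : ContinuousOn F (Ioo a b))
    (hneg : ∀ x ∈ Ioo a b, F x < 0) {h : ℝ → ℝ} {T : ℝ} (hT : 0 < T)
    (hsol : IsSolutionOn F (Ioo a b) h T)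
    (hmax : ∀ S T₂, T < T₂ → S 0 = h 0 → IsSolutionOn F (Ioo a b) S T₂ → False) :
    Tendsto h (𝓝[<] T) (𝓝 a) := by
  have hF0 : ∀ x ∈ Ioo a b, F x ≠ 0 := fun x hx => (hneg x hx).ne
  have hanti := strictAntiOn_of_isSolutionOn hneg hsol
  have hne : (Ioo 0 T).Nonempty := nonempty_Ioo.2 hT
  have hlower : ∀ y ∈ h '' Ioo 0 T, a ≤ y :=
    forall_mem_image.2 fun t ht => (hsol t (Ioo_subset_Ico_self ht)).1.1.le
  have hlim := (hanti.antitoneOn.mono Ioo_subset_Ico_self).tendsto_nhdsWithin_Ioo_left hne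
    ⟨a, hlower⟩
  set L := sInf (h '' Ioo 0 T)
  obtain hL | haL := (le_csInf (hne.image h) hlower).eq_or_lt
  · rw [hL]; exact hlim
  have h0 : h 0 ∈ Ioo a b := (hsol 0 ⟨le_rfl, hT⟩).1
  have hmid : T / 2 ∈ Ioo 0 T := ⟨half_pos hT, half_lt_self hT⟩
  have hL0 : L < h 0 := (csInf_le ⟨a, hlower⟩ (mem_image_of_mem h hmid)).trans_lt
    (hanti ⟨le_rfl, hT⟩ (Ioo_subset_Ico_self hmid) hmid.1)
  have hL : L ∈ Ioo a b := ⟨haL, hL0.trans h0.2⟩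
  -- `travelTime F (h 0) ∘ h` is the identity and is continuous at the limit `L` of `h`.
  have hTL : T = travelTime F (h 0) L := by
    refine tendsto_nhds_unique ?_
      ((hasDerivAt_travelTime hF hF0 h0 hL).continuousAt.tendsto.comp hlim)
    refine (tendsto_id.mono_left nhdsWithin_le_nhds).congr' ?_
    filter_upwards [Ioo_mem_nhdsLT hT] with t ht
    exact (travelTime_of_isSolutionOn hF hF0 hsol (Ioo_subset_Ico_self ht)).symm
  obtain ⟨p, hap, hpL⟩ := exists_between haL
  obtain ⟨S, hS0, hS⟩ := exists_isSolutionOn_of_hasDerivAt_inv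
    (fun x hx => hasDerivAt_travelTime hF hF0 h0 hx) hneg h0 (travelTime_self F _)
    ⟨hap, hpL.trans hL0⟩
  refine (hmax S _ ?_ hS0 hS).elim
  rw [hTL]
  exact strictAntiOn_of_hasDerivAt_inv (fun x hx => hasDerivAt_travelTime hF hF0 h0 hx) hneg
    ⟨hap, hpL.trans hL.2⟩ hL hpL

theorem exists_sub_le_mul_pow_of_isBigO (hF : ContinuousOn F (Ioo 0 b))
    (hneg : ∀ x ∈ Ioo 0 b, F x < 0) {h : ℝ → ℝ} {T : ℝ} (hT : 0 < T)
    (hsol : IsSolutionOn F (Ioo 0 b) h T) (hlim : Tendsto h (𝓝[<] T) (𝓝 0)) {m : ℕ}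
    (hO : (fun s => (F s)⁻¹) =O[𝓝[>] 0] fun s => s ^ m) :
    ∃ C > 0, ∃ t₀ ∈ Ico 0 T, ∀ t ∈ Ico t₀ T, T - t ≤ C * h t ^ (m + 1) := by
  have hF0 : ∀ x ∈ Ioo 0 b, F x ≠ 0 := fun x hx => (hneg x hx).ne
  have hanti := (strictAntiOn_of_isSolutionOn hneg hsol).antitoneOn
  obtain ⟨C, hC, hCO⟩ := hO.exists_pos
  obtain ⟨δ, hδ, hδO⟩ := mem_nhdsGT_iff_exists_Ioo_subset.1 hCO.bound
  obtain ⟨t₀, ht₀δ, ht₀⟩ := ((hlim.eventually (gt_mem_nhds hδ)).and (Ioo_mem_nhdsLT hT)).exists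
  refine ⟨C / (m + 1), by positivity, t₀, Ioo_subset_Ico_self ht₀, fun t ht => ?_⟩
  have ht' : t ∈ Ico 0 T := ⟨ht₀.1.le.trans ht.1, ht.2⟩
  have hδt : h t < δ := (hanti (Ioo_subset_Ico_self ht₀) ht' ht.1).trans_lt ht₀δ
  have hbound : ∀ t₂ ∈ Ioo t T, t₂ - t ≤ C / (m + 1) * h t ^ (m + 1) := by
    intro t₂ ht₂
    have ht₂' : t₂ ∈ Ico 0 T := ⟨ht'.1.trans ht₂.1.le, ht₂.2⟩
    have hpos : 0 < h t₂ := (hsol t₂ ht₂').1.1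
    calc t₂ - t = travelTime F (h 0) (h t₂) - travelTime F (h 0) (h t) := by
          rw [travelTime_of_isSolutionOn hF hF0 hsol ht₂', travelTime_of_isSolutionOn hF hF0 hsol ht']
      _ = -∫ s in h t₂..h t, (F s)⁻¹ := by
          rw [travelTime_sub_travelTime hF hF0 (hsol 0 ⟨le_rfl, hT⟩).1 (hsol t ht').1
            (hsol t₂ ht₂').1, intervalIntegral.integral_symm]
      _ ≤ ‖∫ s in h t₂..h t, (F s)⁻¹‖ := neg_le_abs _
      _ ≤ C / (m + 1) * h t ^ (m + 1) := by
          refine norm_integral_le_of_norm_le_mul_pow hpos.le (hanti ht' ht₂' ht₂.1.le) hC.le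
            fun s hs => ?_
          have hs0 : 0 < s := hpos.trans hs.1
          simpa [abs_of_pos hs0] using hδO ⟨hs0, hs.2.trans_lt hδt⟩
  refine le_of_tendsto ((tendsto_id.mono_left (nhdsWithin_le_nhds (s := Iio T))).sub_const t) ?_
  filter_upwards [Ioo_mem_nhdsLT ht.2] using hbound

end Autonomous

theorem isBigO_inv_mul_comp_mul_right {lam : ℝ → ℝ} {n : ℕ} {r : ℝ} (hr : 0 < r) (c : ℝ)
    (hO : (fun ρ => 1 / (ρ * lam ρ)) =O[𝓝[>] 0] fun ρ => ρ ^ n) :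
    (fun s => (c * lam (s * r) * s)⁻¹) =O[𝓝[>] 0] fun s => s ^ n := by
  have hmul : Tendsto (fun s => s * r) (𝓝[>] 0) (𝓝[>] 0) := by
    simpa using (continuous_mul_const r).continuousWithinAt.tendsto_nhdsWithin
      (x := 0) (s := Ioi 0) (t := Ioi 0) fun s hs => mul_pos hs hr
  have hpow : (fun s => (s * r) ^ n) =O[𝓝[>] 0] fun s => s ^ n := by
    simpa [mul_pow, mul_comm] using isBigO_const_mul_self (r ^ n) (fun s : ℝ => s ^ n) (𝓝[>] 0)
  refine (((hO.comp_tendsto hmul).const_mul_left (r / c)).trans hpow).congr_left fun s => ?_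
  have hrr : r * r⁻¹ = 1 := mul_inv_cancel₀ hr.ne'
  simp only [Function.comp_apply]
  linear_combination (c⁻¹ * s⁻¹ * (lam (s * r))⁻¹) * hrr

/-- Mean curvature flow analogue below the minimal radius: if
`λ ≤ α < 0` on `(0,r]` and `1/(ρλ(ρ)) = O(ρ^{2k-1})` as `ρ → 0⁺`, then the
maximal solution of `h'/h = cλ(hr)`, `h(0) = 1`, is strictly decreasing, exists
only for finite time (no global solution), `h(t) → 0` as `t → T'`, and
`h(t)^{-2k} ≤ C/(T'-t)` near `T'`. -/
theorem stmt14 (lam : ℝ → ℝ) (hcont : ContinuousOn lam (Set.Ioi 0))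
    (k : ℕ) (hk : 1 ≤ k) (α : ℝ) (hα : α < 0)
    (c r : ℝ) (hc : 0 < c) (hr : 0 < r)
    (hbound : ∀ ρ, 0 < ρ → ρ ≤ r → lam ρ ≤ α)
    (hO : (fun ρ => 1 / (ρ * lam ρ))
      =O[nhdsWithin 0 (Set.Ioi 0)] fun ρ => ρ ^ (2 * k - 1))
    (T' : ℝ) (hT'0 : 0 < T')
    (h : ℝ → ℝ) (hh0 : h 0 = 1)
    (hpos : ∀ t ∈ Set.Ico (0 : ℝ) T', 0 < h t)
    (hode : ∀ t ∈ Set.Ico (0 : ℝ) T', HasDerivAt h (c * lam (h t * r) * h t) t)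
    (hmax : ∀ (S : ℝ → ℝ) (T₂ : ℝ), T' < T₂ → S 0 = 1 →
      (∀ t ∈ Set.Ico (0 : ℝ) T₂, 0 < S t ∧
        HasDerivAt S (c * lam (S t * r) * S t) t) → False) :
    StrictAntiOn h (Set.Ico 0 T')
    ∧ (¬ ∃ S : ℝ → ℝ, S 0 = 1 ∧ ∀ t ∈ Set.Ici (0 : ℝ), 0 < S t ∧
        HasDerivAt S (c * lam (S t * r) * S t) t)
    ∧ Tendsto h (nhdsWithin T' (Set.Iio T')) (nhds 0)
    ∧ ∃ C > (0 : ℝ), ∃ t₀ ∈ Set.Ico (0 : ℝ) T',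
        ∀ t ∈ Set.Ico t₀ T', (h t)⁻¹ ^ (2 * k) ≤ C / (T' - t) := by
  set F : ℝ → ℝ := fun x => c * lam (x * r) * x
  have hF : ContinuousOn F (Ioi 0) :=
    (continuousOn_const.mul (hcont.comp (continuousOn_id.mul continuousOn_const)
      fun x hx => mul_pos hx hr)).mul continuousOn_id
  have hneg_one : ∀ x ∈ Ioc 0 1, F x < 0 := fun x hx =>
    mul_neg_of_neg_of_pos (mul_neg_of_pos_of_neg hc
      ((hbound _ (mul_pos hx.1 hr) (mul_le_of_le_one_left hr.le hx.2)).trans_lt hα)) hx.1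
  obtain ⟨b, hb1, hneg⟩ := exists_gt_forall_neg_of_continuousAt
    (hF.continuousAt (Ioi_mem_nhds one_pos)) one_pos hneg_one
  have hle_one : ∀ t ∈ Ico 0 T', h t ≤ 1 :=
    hh0 ▸ le_initial_of_hasDerivAt hode (hh0 ▸ hneg_one 1 ⟨one_pos, le_rfl⟩)
  have hsol : IsSolutionOn F (Ioo 0 b) h T' := fun t ht =>
    ⟨⟨hpos t ht, (hle_one t ht).trans_lt hb1⟩, hode t ht⟩
  have hlim := tendsto_of_isSolutionOn_of_maximal (hF.mono Ioo_subset_Ioi_self) hneg hT'0 hsol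
    fun S T₂ hT₂ hS0 hS => hmax S T₂ hT₂ (hS0.trans hh0) fun t ht => ⟨(hS t ht).1.1, (hS t ht).2⟩
  obtain ⟨C, hC, t₀, ht₀, hrate⟩ := exists_sub_le_mul_pow_of_isBigO
    (hF.mono Ioo_subset_Ioi_self) hneg hT'0 hsol hlim (isBigO_inv_mul_comp_mul_right hr c hO)
  refine ⟨strictAntiOn_of_isSolutionOn hneg hsol,
    fun ⟨S, hS0, hS⟩ => hmax S (T' + 1) (by linarith) hS0 fun t ht => hS t ht.1,
    hlim, C, hC, t₀, ht₀, fun t ht => ?_⟩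
  have ht' : t ∈ Ico 0 T' := ⟨ht₀.1.trans ht.1, ht.2⟩
  rw [inv_pow, inv_eq_one_div, div_le_div_iff₀ (pow_pos (hpos t ht') _) (sub_pos.2 ht.2),
    one_mul, ← Nat.sub_add_cancel (by omega : 1 ≤ 2 * k)]
  exact hrate t ht
end

section
/- Let λ : (0,∞) → ℝ be continuous with λ(ρ) ≥ α > 0 for all ρ ∈ [r,∞) and 1/(ρ·λ(ρ)) = O(ρ^{-2k-1}) as ρ → ∞ for some integer k ≥ 1. Fix c > 0 and r > 0. Let h : [0,T') → (0,∞) be the maximal solution of h'(t)/h(t) = c·λ(h(t)·r), h(0) = 1. Then h is strictly increasing, T' < ∞, h(t) → ∞ as t → T', and there is C > 0 with h(t)^{2k} ≤ C/(T'-t) near T'. Moreover T' = (1/c)·∫_r^∞ dρ/(ρ·λ(ρ)). -/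
open Filter Asymptotics MeasureTheory Set Topology Function

/-!
The radius `ρ = r h` obeys `ρ' = c ρ λ(ρ)`. As long as `h ≥ 1` (and `h` cannot drop below `1`,
since `h' = c λ(r) > 0` wherever `h = 1`), separation of variables gives
`c t = F (r h(t))` with `F x = ∫_r^x dρ/(ρ λ(ρ))`. The decay hypothesis makes
`I = ∫_r^∞ dρ/(ρ λ(ρ))` finite, so `F` is an increasing bijection onto `[0, I)` on `[r, ∞)`, and
`t ↦ F⁻¹(c t)/r` solves the equation exactly on `[0, I/c)`; maximality forces `T' = I/c` and
`h → ∞`. The rate is read off the tail: `c (T' - t) = ∫_{r h(t)}^∞ dρ/(ρ λ(ρ)) = O(h(t)^{-2k})`.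
-/

lemma inv_pow_succ_eq_rpow {ρ : ℝ} (hρ : 0 ≤ ρ) (n : ℕ) :
    (ρ ^ (n + 1))⁻¹ = ρ ^ (-((n : ℝ) + 1)) := by
  rw [Real.rpow_neg hρ, ← Nat.cast_add_one, Real.rpow_natCast]

lemma integrableOn_Ioi_inv_pow_succ {n : ℕ} (hn : 0 < n) {x : ℝ} (hx : 0 < x) :
    IntegrableOn (fun ρ : ℝ => (ρ ^ (n + 1))⁻¹) (Ioi x) := by
  have hn' : (1 : ℝ) ≤ n := by exact_mod_cast hn
  exact (integrableOn_Ioi_rpow_of_lt (by linarith) hx).congr_fun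
    (fun ρ hρ => (inv_pow_succ_eq_rpow (hx.trans hρ).le n).symm) measurableSet_Ioi

lemma integral_Ioi_inv_pow_succ {n : ℕ} (hn : 0 < n) {x : ℝ} (hx : 0 < x) :
    ∫ ρ in Ioi x, (ρ ^ (n + 1))⁻¹ = (x ^ n)⁻¹ / n := by
  have hn' : (1 : ℝ) ≤ n := by exact_mod_cast hn
  rw [setIntegral_congr_fun measurableSet_Ioi fun ρ hρ => inv_pow_succ_eq_rpow (hx.trans hρ).le n,
    integral_Ioi_rpow_of_lt (by linarith) hx, show -((n : ℝ) + 1) + 1 = -n by ring,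
    Real.rpow_neg hx.le, Real.rpow_natCast]
  ring

lemma integrableOn_Ioi_of_isBigO_inv_pow_succ {f : ℝ → ℝ} {a : ℝ} {n : ℕ} (hn : 0 < n)
    (hf : ContinuousOn f (Ici a)) (hO : f =O[atTop] fun ρ => (ρ ^ (n + 1))⁻¹) :
    IntegrableOn f (Ioi a) :=
  ((hf.locallyIntegrableOn measurableSet_Ici).integrableOn_of_isBigO_atTop hO
    ⟨Ioi 1, Ioi_mem_atTop 1, integrableOn_Ioi_inv_pow_succ hn one_pos⟩).mono_set
    Ioi_subset_Ici_self

lemma exists_pos_eventually_setIntegral_Ioi_le {f : ℝ → ℝ} {a : ℝ} {n : ℕ} (hn : 0 < n)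
    (hf : IntegrableOn f (Ioi a)) (hO : f =O[atTop] fun ρ => (ρ ^ (n + 1))⁻¹) :
    ∃ C > 0, ∀ᶠ x in atTop, ∫ ρ in Ioi x, f ρ ≤ C * (x ^ n)⁻¹ := by
  obtain ⟨C, hC, hCf⟩ := hO.exists_pos
  obtain ⟨M, hM⟩ := eventually_atTop.1 hCf.bound
  refine ⟨C / n, by positivity, eventually_atTop.2 ⟨max (max M a) 1, fun x hx => ?_⟩⟩
  obtain ⟨⟨hxM, hxa⟩, hx1⟩ : (M ≤ x ∧ a ≤ x) ∧ 1 ≤ x := by simpa using hx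
  have hx0 : 0 < x := one_pos.trans_le hx1
  calc ∫ ρ in Ioi x, f ρ ≤ ∫ ρ in Ioi x, C * (ρ ^ (n + 1))⁻¹ := by
        refine setIntegral_mono_on (hf.mono_set (Ioi_subset_Ioi hxa))
          ((integrableOn_Ioi_inv_pow_succ hn hx0).const_mul C) measurableSet_Ioi fun ρ hρ => ?_
        have := hM ρ (hxM.trans hρ.le)
        rw [Real.norm_of_nonneg (inv_nonneg.2 (pow_nonneg (hx0.trans hρ).le _))] at this
        exact (le_abs_self _).trans this
    _ = C / n * (x ^ n)⁻¹ := by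
        rw [integral_const_mul, integral_Ioi_inv_pow_succ hn hx0]
        ring

lemma le_of_hasDerivWithinAt_pos_of_eq {f f' : ℝ → ℝ} {a b y : ℝ}
    (hf : ContinuousOn f (Icc a b)) (hf' : ∀ x ∈ Ico a b, HasDerivWithinAt f (f' x) (Ici x) x)
    (ha : y ≤ f a) (hpos : ∀ x ∈ Ico a b, f x = y → 0 < f' x) :
    ∀ ⦃x⦄, x ∈ Icc a b → y ≤ f x := fun _ hx =>
  neg_le_neg_iff.1 <| image_le_of_deriv_right_lt_deriv_boundary' (f := fun x => -f x)
    (B := fun _ => -y) (B' := fun _ => 0) hf.neg (fun x hx => (hf' x hx).neg) (neg_le_neg ha)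
    continuousOn_const (fun _ _ => hasDerivWithinAt_const _ _ _)
    (fun x hx hfx => neg_neg_of_pos (hpos x hx (neg_inj.1 hfx))) hx

lemma StrictMono.tendsto_atTop_of_tendsto_comp {α β γ : Type*} [LinearOrder α] [LinearOrder β]
    [TopologicalSpace β] [OrderTopology β] {F : α → β} {u : γ → α} {l : Filter γ} {L : β}
    (hF : StrictMono F) (hlt : ∀ x, F x < L) (hu : Tendsto (F ∘ u) l (𝓝 L)) :
    Tendsto u l atTop :=
  Filter.tendsto_atTop.2 fun x =>
    (hu.eventually (eventually_gt_nhds (hlt x))).mono fun _ hx => (hF.lt_iff_lt.1 hx).le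

section ArrivalTime

variable (lam : ℝ → ℝ) (r : ℝ)

/-- `1 / (ρ λ(ρ))`, frozen at its value at `r` for `ρ < r` so that it is continuous and positive
on all of `ℝ`. -/
noncomputable def invRadialSpeed (ρ : ℝ) : ℝ := 1 / (max ρ r * lam (max ρ r))

/-- `c` times the time the radius needs to grow from `r` to `x`. -/
noncomputable def arrivalTime (x : ℝ) : ℝ := ∫ ρ in r..x, invRadialSpeed lam r ρ

variable {lam r}

lemma invRadialSpeed_of_le {ρ : ℝ} (hρ : r ≤ ρ) : invRadialSpeed lam r ρ = 1 / (ρ * lam ρ) := by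
  rw [invRadialSpeed, max_eq_left hρ]

lemma invRadialSpeed_denom_pos (hr : 0 < r) (hlam : ∀ ρ, r ≤ ρ → 0 < lam ρ) (ρ : ℝ) :
    0 < max ρ r * lam (max ρ r) :=
  mul_pos (hr.trans_le (le_max_right ρ r)) (hlam _ (le_max_right ρ r))

lemma invRadialSpeed_pos (hr : 0 < r) (hlam : ∀ ρ, r ≤ ρ → 0 < lam ρ) (ρ : ℝ) :
    0 < invRadialSpeed lam r ρ :=
  one_div_pos.2 (invRadialSpeed_denom_pos hr hlam ρ)

lemma continuous_invRadialSpeed (hr : 0 < r) (hlam : ∀ ρ, r ≤ ρ → 0 < lam ρ)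
    (hcont : ContinuousOn lam (Ici r)) : Continuous (invRadialSpeed lam r) := by
  have hmax : Continuous fun ρ : ℝ => max ρ r := continuous_id.max continuous_const
  exact continuous_const.div (hmax.mul (hcont.comp_continuous hmax fun ρ => le_max_right ρ r))
    fun ρ => (invRadialSpeed_denom_pos hr hlam ρ).ne'

lemma hasStrictDerivAt_arrivalTime (hφ : Continuous (invRadialSpeed lam r)) (x : ℝ) :
    HasStrictDerivAt (arrivalTime lam r) (invRadialSpeed lam r x) x :=
  hφ.integral_hasStrictDerivAt r x

lemma strictMono_arrivalTime (hr : 0 < r) (hlam : ∀ ρ, r ≤ ρ → 0 < lam ρ)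
    (hφ : Continuous (invRadialSpeed lam r)) : StrictMono (arrivalTime lam r) :=
  strictMono_of_hasDerivAt_pos (fun x => (hasStrictDerivAt_arrivalTime hφ x).hasDerivAt)
    (invRadialSpeed_pos hr hlam)

lemma arrivalTime_self : arrivalTime lam r r = 0 := intervalIntegral.integral_same

lemma tendsto_arrivalTime (hint : IntegrableOn (invRadialSpeed lam r) (Ioi r)) :
    Tendsto (arrivalTime lam r) atTop (𝓝 (∫ ρ in Ioi r, invRadialSpeed lam r ρ)) :=
  intervalIntegral_tendsto_integral_Ioi r hint tendsto_id

lemma arrivalTime_lt_integral (hr : 0 < r) (hlam : ∀ ρ, r ≤ ρ → 0 < lam ρ)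
    (hφ : Continuous (invRadialSpeed lam r)) (hint : IntegrableOn (invRadialSpeed lam r) (Ioi r))
    (x : ℝ) : arrivalTime lam r x < ∫ ρ in Ioi r, invRadialSpeed lam r ρ :=
  have hmono := strictMono_arrivalTime hr hlam hφ
  (hmono (lt_add_one x)).trans_le (hmono.monotone.ge_of_tendsto (tendsto_arrivalTime hint) _)

lemma integral_Ioi_sub_arrivalTime (hint : IntegrableOn (invRadialSpeed lam r) (Ioi r)) {x : ℝ}
    (hx : r ≤ x) :
    (∫ ρ in Ioi r, invRadialSpeed lam r ρ) - arrivalTime lam r x =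
      ∫ ρ in Ioi x, invRadialSpeed lam r ρ := by
  rw [arrivalTime, ← intervalIntegral.integral_Ioi_sub_Ioi hint hx]
  ring

lemma exists_arrivalTime_eq (hr : 0 < r) (hlam : ∀ ρ, r ≤ ρ → 0 < lam ρ)
    (hφ : Continuous (invRadialSpeed lam r)) (hint : IntegrableOn (invRadialSpeed lam r) (Ioi r))
    {s : ℝ} (hs0 : 0 ≤ s) (hsI : s < ∫ ρ in Ioi r, invRadialSpeed lam r ρ) :
    ∃ x, r ≤ x ∧ arrivalTime lam r x = s := by
  have hmono := strictMono_arrivalTime hr hlam hφ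
  obtain ⟨x, hx⟩ := mem_range_of_exists_le_of_exists_ge
    (continuous_iff_continuousAt.2 fun x =>
      (hasStrictDerivAt_arrivalTime hφ x).hasDerivAt.continuousAt)
    ⟨r, arrivalTime_self.trans_le hs0⟩
    ((tendsto_arrivalTime hint).eventually (eventually_ge_nhds hsI)).exists
  exact ⟨x, hmono.le_iff_le.1 (by rw [arrivalTime_self, hx]; exact hs0), hx⟩

end ArrivalTime

section Solution

variable {lam : ℝ → ℝ} {r c T : ℝ} {h : ℝ → ℝ}

lemma one_le_of_hasDerivAt (hc : 0 < c) (hlam : 0 < lam r) (h0 : h 0 = 1)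
    (hode : ∀ t ∈ Ico 0 T, HasDerivAt h (c * lam (h t * r) * h t) t) :
    ∀ t ∈ Ico 0 T, 1 ≤ h t := by
  intro t ht
  have hsub : Icc 0 t ⊆ Ico 0 T := Icc_subset_Ico_right ht.2
  refine le_of_hasDerivWithinAt_pos_of_eq
    (fun s hs => (hode s (hsub hs)).continuousAt.continuousWithinAt)
    (fun s hs => (hode s (hsub (Ico_subset_Icc_self hs))).hasDerivWithinAt) h0.ge
    (fun s _ hs => ?_) (right_mem_Icc.2 ht.1)
  rw [hs, one_mul, mul_one]
  exact mul_pos hc hlam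

/-- Separation of variables for `h' = c λ(h r) h`. -/
lemma arrivalTime_comp_eq (hr : 0 < r) (hc : 0 < c) (hlam : ∀ ρ, r ≤ ρ → 0 < lam ρ)
    (hφ : Continuous (invRadialSpeed lam r)) (h0 : h 0 = 1)
    (hode : ∀ t ∈ Ico 0 T, HasDerivAt h (c * lam (h t * r) * h t) t) :
    ∀ t ∈ Ico 0 T, arrivalTime lam r (h t * r) = c * t := by
  have hderiv : ∀ s ∈ Ico 0 T, HasDerivAt (fun u => arrivalTime lam r (h u * r)) c s := by
    intro s hs
    have hge : 1 ≤ h s := one_le_of_hasDerivAt hc (hlam r le_rfl) h0 hode s hs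
    have hsr : r ≤ h s * r := le_mul_of_one_le_left hr.le hge
    refine ((hasStrictDerivAt_arrivalTime hφ _).hasDerivAt.comp s
      ((hode s hs).mul_const r)).congr_deriv ?_
    have := (hlam _ hsr).ne'
    have := (zero_lt_one.trans_le hge).ne'
    rw [invRadialSpeed_of_le hsr]
    field_simp
  intro t ht
  have hsub : Icc 0 t ⊆ Ico 0 T := Icc_subset_Ico_right ht.2
  refine eq_of_has_deriv_right_eq (f' := fun _ => c) (g := fun u => c * u)
    (fun s hs => (hderiv s (hsub (Ico_subset_Icc_self hs))).hasDerivWithinAt)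
    (fun _ _ => (hasDerivAt_const_mul c).hasDerivWithinAt)
    (fun s hs => (hderiv s (hsub hs)).continuousAt.continuousWithinAt)
    (continuous_const_mul c).continuousOn ?_ t (right_mem_Icc.2 ht.1)
  simp [h0, arrivalTime_self]

lemma strictMonoOn_of_arrivalTime_comp_eq {s : Set ℝ} (hr : 0 < r) (hc : 0 < c)
    (hF : StrictMono (arrivalTime lam r)) (hkey : ∀ t ∈ s, arrivalTime lam r (h t * r) = c * t) :
    StrictMonoOn h s := fun a ha b hb hab =>
  lt_of_mul_lt_mul_right (hF.lt_iff_lt.1 (by rw [hkey a ha, hkey b hb]; gcongr)) hr.le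

lemma le_integral_div_of_arrivalTime_comp_eq (hr : 0 < r) (hc : 0 < c)
    (hlam : ∀ ρ, r ≤ ρ → 0 < lam ρ) (hφ : Continuous (invRadialSpeed lam r))
    (hint : IntegrableOn (invRadialSpeed lam r) (Ioi r))
    (hkey : ∀ t ∈ Ico 0 T, arrivalTime lam r (h t * r) = c * t) :
    T ≤ (∫ ρ in Ioi r, invRadialSpeed lam r ρ) / c := by
  set I := ∫ ρ in Ioi r, invRadialSpeed lam r ρ
  refine le_of_not_gt fun hlt => ?_
  have hI : 0 < I := arrivalTime_self (lam := lam) ▸ arrivalTime_lt_integral hr hlam hφ hint r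
  refine (arrivalTime_lt_integral hr hlam hφ hint (h (I / c) * r)).ne ?_
  rw [hkey _ ⟨by positivity, hlt⟩, mul_div_cancel₀ _ hc.ne']

/-- The explicit solution `t ↦ F⁻¹(c t) / r`, defined as long as `c t` stays in the range
`[0, I)` of `F` on `[r, ∞)`. -/
lemma exists_solution_Ico (hr : 0 < r) (hc : 0 < c) (hlam : ∀ ρ, r ≤ ρ → 0 < lam ρ)
    (hφ : Continuous (invRadialSpeed lam r)) (hint : IntegrableOn (invRadialSpeed lam r) (Ioi r)) :
    ∃ S : ℝ → ℝ, S 0 = 1 ∧ ∀ t ∈ Ico 0 ((∫ ρ in Ioi r, invRadialSpeed lam r ρ) / c),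
      0 < S t ∧ HasDerivAt S (c * lam (S t * r) * S t) t := by
  have hinj := (strictMono_arrivalTime hr hlam hφ).injective
  refine ⟨fun t => invFun (arrivalTime lam r) (c * t) / r, ?_, fun t ht => ?_⟩
  · dsimp only
    rw [mul_zero, ← arrivalTime_self (lam := lam), leftInverse_invFun hinj, div_self hr.ne']
  obtain ⟨x, hxr, hx⟩ := exists_arrivalTime_eq hr hlam hφ hint (mul_nonneg hc.le ht.1)
    ((lt_div_iff₀' hc).1 ht.2)
  have hinv : invFun (arrivalTime lam r) (c * t) = x := hx ▸ leftInverse_invFun hinj x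
  have hd : HasDerivAt (invFun (arrivalTime lam r)) (invRadialSpeed lam r x)⁻¹ (c * t) :=
    hx ▸ ((hasStrictDerivAt_arrivalTime hφ x).to_local_left_inverse
      (invRadialSpeed_pos hr hlam x).ne' (.of_forall (leftInverse_invFun hinj))).hasDerivAt
  dsimp only
  refine ⟨by rw [hinv]; exact div_pos (hr.trans_le hxr) hr, ?_⟩
  refine ((hd.comp t (hasDerivAt_const_mul c)).div_const r).congr_deriv ?_
  have := (hlam x hxr).ne'
  rw [hinv, div_mul_cancel₀ _ hr.ne', invRadialSpeed_of_le hxr]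
  field_simp

lemma tendsto_mul_of_arrivalTime_comp_eq (hr : 0 < r) (hlam : ∀ ρ, r ≤ ρ → 0 < lam ρ)
    (hφ : Continuous (invRadialSpeed lam r)) (hint : IntegrableOn (invRadialSpeed lam r) (Ioi r))
    (hc : 0 < c) (hT0 : 0 < T) (hT : T = (∫ ρ in Ioi r, invRadialSpeed lam r ρ) / c)
    (hkey : ∀ t ∈ Ico 0 T, arrivalTime lam r (h t * r) = c * t) :
    Tendsto (fun t => h t * r) (𝓝[<] T) atTop := by
  refine (strictMono_arrivalTime hr hlam hφ).tendsto_atTop_of_tendsto_comp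
    (arrivalTime_lt_integral hr hlam hφ hint) ?_
  have hlim : Tendsto (fun t => c * t) (𝓝[<] T) (𝓝 (∫ ρ in Ioi r, invRadialSpeed lam r ρ)) := by
    rw [← mul_div_cancel₀ (∫ ρ in Ioi r, invRadialSpeed lam r ρ) hc.ne', ← hT]
    exact (continuous_const_mul c).continuousAt.continuousWithinAt
  refine hlim.congr' ?_
  filter_upwards [Ico_mem_nhdsLT hT0] with t ht using (hkey t ht).symm

lemma eventually_pow_le_div_sub (hr : 0 < r) (hc : 0 < c) {n : ℕ} {C : ℝ}
    (hint : IntegrableOn (invRadialSpeed lam r) (Ioi r))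
    (htail : ∀ᶠ x in atTop, ∫ ρ in Ioi x, invRadialSpeed lam r ρ ≤ C * (x ^ n)⁻¹)
    (hT0 : 0 < T) (hT : T = (∫ ρ in Ioi r, invRadialSpeed lam r ρ) / c)
    (hkey : ∀ t ∈ Ico 0 T, arrivalTime lam r (h t * r) = c * t)
    (htend : Tendsto (fun t => h t * r) (𝓝[<] T) atTop) :
    ∀ᶠ t in 𝓝[<] T, h t ^ n ≤ C / (c * r ^ n) / (T - t) := by
  filter_upwards [htend.eventually htail, htend.eventually (eventually_ge_atTop r),
    Ioo_mem_nhdsLT hT0] with t hx hxr ht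
  have hh : 0 < h t := pos_of_mul_pos_left (hr.trans_le hxr) hr.le
  have hTt : c * (T - t) = ∫ ρ in Ioi (h t * r), invRadialSpeed lam r ρ := by
    rw [← integral_Ioi_sub_arrivalTime hint hxr, hkey t (Ioo_subset_Ico_self ht), hT]
    field_simp
  rw [le_div_iff₀ (sub_pos.2 ht.2), le_div_iff₀ (by positivity)]
  calc h t ^ n * (T - t) * (c * r ^ n) = (h t * r) ^ n * (c * (T - t)) := by ring
    _ ≤ (h t * r) ^ n * (C * ((h t * r) ^ n)⁻¹) := by rw [hTt]; gcongr
    _ = C := by field_simp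

end Solution

theorem stmt15_general (lam : ℝ → ℝ) (hcont : ContinuousOn lam (Set.Ioi 0))
    (k : ℕ) (hk : 1 ≤ k) (α : ℝ) (hα : 0 < α)
    (c r : ℝ) (hc : 0 < c) (hr : 0 < r)
    (hbound : ∀ ρ, r ≤ ρ → α ≤ lam ρ)
    (hO : (fun ρ => 1 / (ρ * lam ρ)) =O[atTop] fun ρ => (ρ ^ (2 * k + 1))⁻¹)
    (T' : ℝ) (hT'0 : 0 < T')
    (h : ℝ → ℝ) (hh0 : h 0 = 1)
    (hode : ∀ t ∈ Set.Ico (0 : ℝ) T', HasDerivAt h (c * lam (h t * r) * h t) t)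
    (hmax : ∀ (S : ℝ → ℝ) (T₂ : ℝ), T' < T₂ → S 0 = 1 →
      (∀ t ∈ Set.Ico (0 : ℝ) T₂, 0 < S t ∧
        HasDerivAt S (c * lam (S t * r) * S t) t) → False) :
    StrictMonoOn h (Set.Ico 0 T')
    ∧ (¬ ∃ S : ℝ → ℝ, S 0 = 1 ∧ ∀ t ∈ Set.Ici (0 : ℝ), 0 < S t ∧
        HasDerivAt S (c * lam (S t * r) * S t) t)
    ∧ Tendsto h (nhdsWithin T' (Set.Iio T')) atTop
    ∧ (∃ C > (0 : ℝ), ∃ t₀ ∈ Set.Ico (0 : ℝ) T',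
        ∀ t ∈ Set.Ico t₀ T', (h t) ^ (2 * k) ≤ C / (T' - t))
    ∧ T' = (1 / c) * ∫ ρ in Set.Ioi r, 1 / (ρ * lam ρ) := by
  have hlam : ∀ ρ, r ≤ ρ → 0 < lam ρ := fun ρ hρ => hα.trans_le (hbound ρ hρ)
  have hφ := continuous_invRadialSpeed hr hlam (hcont.mono fun _ hρ => hr.trans_le hρ)
  have hO' : invRadialSpeed lam r =O[atTop] fun ρ => (ρ ^ (2 * k + 1))⁻¹ :=
    hO.congr' ((eventually_ge_atTop r).mono fun _ hρ => (invRadialSpeed_of_le hρ).symm) .rfl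
  have h2k : 0 < 2 * k := by omega
  have hint := integrableOn_Ioi_of_isBigO_inv_pow_succ (a := r) h2k hφ.continuousOn hO'
  have hkey := arrivalTime_comp_eq hr hc hlam hφ hh0 hode
  have hT' : T' = (∫ ρ in Ioi r, invRadialSpeed lam r ρ) / c := by
    refine (le_integral_div_of_arrivalTime_comp_eq hr hc hlam hφ hint hkey).antisymm
      (not_lt.1 fun hlt => ?_)
    obtain ⟨S, hS0, hS⟩ := exists_solution_Ico hr hc hlam hφ hint
    exact hmax S _ hlt hS0 hS
  have htend := tendsto_mul_of_arrivalTime_comp_eq hr hlam hφ hint hc hT'0 hT' hkey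
  obtain ⟨C, hC, htail⟩ := exists_pos_eventually_setIntegral_Ioi_le h2k hint hO'
  obtain ⟨t₀, ht₀, hrate⟩ := (nhdsLT_basis_Ico_of_exists_lt ⟨0, hT'0⟩).mem_iff.1
    (eventually_pow_le_div_sub hr hc hint htail hT'0 hT' hkey htend)
  refine ⟨strictMonoOn_of_arrivalTime_comp_eq hr hc (strictMono_arrivalTime hr hlam hφ) hkey,
    fun ⟨S, hS0, hS⟩ => hmax S (T' + 1) (lt_add_one T') hS0 fun t ht => hS t ht.1,
    (htend.atTop_div_const hr).congr fun t => mul_div_cancel_right₀ _ hr.ne',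
    ⟨C / (c * r ^ (2 * k)), by positivity, max t₀ 0, ⟨le_max_right _ _, max_lt ht₀ hT'0⟩,
      fun t ht => hrate ⟨(le_max_left _ _).trans ht.1, ht.2⟩⟩, ?_⟩
  rw [hT', ← setIntegral_congr_fun measurableSet_Ioi fun ρ hρ => invRadialSpeed_of_le (le_of_lt hρ)]
  ring

/-- Mean curvature flow analogue above the minimal radius: if
`λ ≥ α > 0` on `[r,∞)` and `1/(ρλ(ρ)) = O(ρ^{-2k-1})` as `ρ → ∞`, then the
maximal solution of `h'/h = cλ(hr)`, `h(0) = 1`, is strictly increasing, there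
is no global solution (`T' < ∞`), `h(t) → ∞` as `t → T'`,
`h(t)^{2k} ≤ C/(T'-t)` near `T'`, and `T' = (1/c)∫_r^∞ dρ/(ρλ(ρ))`. -/
theorem stmt15 (lam : ℝ → ℝ) (hcont : ContinuousOn lam (Set.Ioi 0))
    (k : ℕ) (hk : 1 ≤ k) (α : ℝ) (hα : 0 < α)
    (c r : ℝ) (hc : 0 < c) (hr : 0 < r)
    (hbound : ∀ ρ, r ≤ ρ → α ≤ lam ρ)
    (hO : (fun ρ => 1 / (ρ * lam ρ)) =O[atTop] fun ρ => (ρ ^ (2 * k + 1))⁻¹)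
    (T' : ℝ) (hT'0 : 0 < T')
    (h : ℝ → ℝ) (hh0 : h 0 = 1)
    (hpos : ∀ t ∈ Set.Ico (0 : ℝ) T', 0 < h t)
    (hode : ∀ t ∈ Set.Ico (0 : ℝ) T', HasDerivAt h (c * lam (h t * r) * h t) t)
    (hmax : ∀ (S : ℝ → ℝ) (T₂ : ℝ), T' < T₂ → S 0 = 1 →
      (∀ t ∈ Set.Ico (0 : ℝ) T₂, 0 < S t ∧
        HasDerivAt S (c * lam (S t * r) * S t) t) → False) :
    StrictMonoOn h (Set.Ico 0 T')
    ∧ (¬ ∃ S : ℝ → ℝ, S 0 = 1 ∧ ∀ t ∈ Set.Ici (0 : ℝ), 0 < S t ∧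
        HasDerivAt S (c * lam (S t * r) * S t) t)
    ∧ Tendsto h (nhdsWithin T' (Set.Iio T')) atTop
    ∧ (∃ C > (0 : ℝ), ∃ t₀ ∈ Set.Ico (0 : ℝ) T',
        ∀ t ∈ Set.Ico t₀ T', (h t) ^ (2 * k) ≤ C / (T' - t))
    ∧ T' = (1 / c) * ∫ ρ in Set.Ioi r, 1 / (ρ * lam ρ) :=
  stmt15_general lam hcont k hk α hα c r hc hr hbound hO T' hT'0 h hh0 hode hmax
end

section
/- Let g^{αβ̄}(z) = (e^s/u'(s))δ^{αβ} + z^α z̄^β(1/u''(s) - 1/u'(s)) with s = log|z|², and let f(z) = P(log|z|²). Then the gradient coefficients satisfy g^{αβ̄}·∂f/∂z̄^β = (P'(s)/u''(s))·z^α; consequently, the vector field ∇f = g^{αβ̄}(∂f/∂z̄^β)·∂/∂z^α is holomorphic on ℂⁿ∖{0} if and only if P'(s)/u''(s) is a constant c, and in that case ∇f equals c times the holomorphic Euler vector field z^α·∂/∂z^α. -/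
/-!
Since `∂f/∂z̄^β = P'(s) e^{-s} z^β` is a multiple of `z`, contracting it with the inverse metric
`a δ + b z z̄ᵀ` only involves `a + b |z|²`, which for `a = e^s/u'`, `b = 1/u'' - 1/u'` and
`|z|² = e^s` collapses to `e^s/u''`; this gives `(P'/u'') z^α`. Every value of `s` is attained
on `ℂⁿ∖{0}`, so the gradient is a constant multiple of the Euler field exactly when `P'/u''` is
constant.
-/

/-- The variable `s = log|z|²` associated to a point of `ℂⁿ∖{0}`. -/
noncomputable def sOf {n : ℕ} (z : EuclideanSpace ℂ (Fin n)) : ℝ :=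
  Real.log (‖z‖ ^ 2)

open ComplexConjugate

lemma sum_conj_mul_self_eq_norm_sq {ι : Type*} [Fintype ι] (z : EuclideanSpace ℂ ι) :
    ∑ i, conj (z i) * z i = ((‖z‖ ^ 2 : ℝ) : ℂ) := by
  simp [EuclideanSpace.norm_sq_eq, Complex.conj_mul']

lemma sum_smul_id_add_rankOne_mul_self {ι : Type*} [Fintype ι] [DecidableEq ι] (a b : ℝ)
    (z : EuclideanSpace ℂ ι) (α : ι) :
    ∑ β, ((a : ℂ) * (if α = β then 1 else 0) + z α * conj (z β) * (b : ℂ)) * z β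
      = ((a + b * ‖z‖ ^ 2 : ℝ) : ℂ) * z α := by
  simp only [add_mul, Finset.sum_add_distrib, mul_ite, mul_one, mul_zero, ite_mul, zero_mul,
    Finset.sum_ite_eq, Finset.mem_univ, if_true]
  have hrank : ∑ β, z α * conj (z β) * (b : ℂ) * z β
      = z α * (b : ℂ) * ∑ β, conj (z β) * z β := by
    rw [Finset.mul_sum]
    exact Finset.sum_congr rfl fun β _ => by ring
  rw [hrank, sum_conj_mul_self_eq_norm_sq]
  push_cast
  ring

lemma exp_sOf {n : ℕ} {z : EuclideanSpace ℂ (Fin n)} (hz : z ≠ 0) :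
    Real.exp (sOf z) = ‖z‖ ^ 2 :=
  Real.exp_log (pow_pos (norm_pos_iff.mpr hz) 2)

lemma exists_ne_zero_sOf_eq {n : ℕ} (hn : 0 < n) (s : ℝ) :
    ∃ z : EuclideanSpace ℂ (Fin n), z ≠ 0 ∧ sOf z = s := by
  refine ⟨EuclideanSpace.single ⟨0, hn⟩ (Real.exp (s / 2) : ℂ), by simp, ?_⟩
  rw [sOf, PiLp.norm_single, Complex.norm_real, Real.norm_of_nonneg (Real.exp_pos _).le,
    ← Real.exp_nat_mul, Real.log_exp]
  ring

lemma exists_ne_zero_apply_of_ne_zero {ι : Type*} {z : EuclideanSpace ℂ ι} (hz : z ≠ 0) :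
    ∃ i, z i ≠ 0 := by
  by_contra! h
  exact hz (PiLp.ext h)

lemma gradient_eq_smul_euler {n : ℕ} (p q dP : ℝ → ℝ)
    (ginv : EuclideanSpace ℂ (Fin n) → Matrix (Fin n) (Fin n) ℂ)
    (hginv : ∀ z, z ≠ 0 → ∀ α β, ginv z α β
      = ((Real.exp (sOf z) / p (sOf z) : ℝ) : ℂ) * (if α = β then 1 else 0)
        + z α * (starRingEnd ℂ) (z β) * ((1 / q (sOf z) - 1 / p (sOf z) : ℝ) : ℂ))
    {z : EuclideanSpace ℂ (Fin n)} (hz : z ≠ 0) (α : Fin n) :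
    ∑ β, ginv z α β * (((dP (sOf z) * Real.exp (-(sOf z)) : ℝ) : ℂ) * z β)
      = ((dP (sOf z) / q (sOf z) : ℝ) : ℂ) * z α := by
  set s := sOf z
  have hcontract : ∑ β, ginv z α β * (((dP s * Real.exp (-s) : ℝ) : ℂ) * z β)
      = ((dP s * Real.exp (-s) : ℝ) : ℂ)
        * (((Real.exp s / p s + (1 / q s - 1 / p s) * ‖z‖ ^ 2 : ℝ) : ℂ) * z α) := by
    rw [← sum_smul_id_add_rankOne_mul_self, Finset.mul_sum]
    exact Finset.sum_congr rfl fun β _ => by rw [hginv z hz]; ring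
  have hcoeff : dP s * Real.exp (-s) * (Real.exp s / p s + (1 / q s - 1 / p s) * Real.exp s)
      = dP s / q s := by
    rw [Real.exp_neg]
    field_simp [Real.exp_ne_zero s]
    ring
  rw [hcontract, ← exp_sOf hz, ← hcoeff]
  push_cast
  ring

theorem stmt19_general (n : ℕ) (hn : 2 ≤ n) (p q dP : ℝ → ℝ)
    (ginv : EuclideanSpace ℂ (Fin n) → Matrix (Fin n) (Fin n) ℂ)
    (hginv : ∀ z, z ≠ 0 → ∀ α β, ginv z α β
      = ((Real.exp (sOf z) / p (sOf z) : ℝ) : ℂ) * (if α = β then 1 else 0)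
        + z α * (starRingEnd ℂ) (z β) * ((1 / q (sOf z) - 1 / p (sOf z) : ℝ) : ℂ)) :
    (∀ z : EuclideanSpace ℂ (Fin n), z ≠ 0 → ∀ α,
      ∑ β, ginv z α β * (((dP (sOf z) * Real.exp (-(sOf z)) : ℝ) : ℂ) * z β)
        = ((dP (sOf z) / q (sOf z) : ℝ) : ℂ) * z α)
    ∧ ((∃ c : ℝ, ∀ s, dP s / q s = c) ↔
        (∃ c : ℝ, ∀ z : EuclideanSpace ℂ (Fin n), z ≠ 0 → ∀ α,
          ∑ β, ginv z α β * (((dP (sOf z) * Real.exp (-(sOf z)) : ℝ) : ℂ) * z β)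
            = (c : ℂ) * z α)) := by
  have hgrad := fun z (hz : z ≠ 0) => gradient_eq_smul_euler p q dP ginv hginv hz
  refine ⟨hgrad, ⟨fun ⟨c, hc⟩ => ⟨c, fun z hz α => by rw [hgrad z hz, hc]⟩, ?_⟩⟩
  rintro ⟨c, hc⟩
  refine ⟨c, fun s => ?_⟩
  obtain ⟨z, hz, rfl⟩ := exists_ne_zero_sOf_eq (n := n) (by omega) s
  obtain ⟨α, hzα⟩ := exists_ne_zero_apply_of_ne_zero hz
  have h := hc z hz α
  rw [hgrad z hz] at h
  exact Complex.ofReal_injective (mul_right_cancel₀ hzα h)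

/-- With `g^{αβ̄}(z) = (e^s/u'(s))δ^{αβ} + z^α z̄^β(1/u''(s)-1/u'(s))`
and `f(z) = P(log|z|²)`, so `∂f/∂z̄^β = P'(s)e^{-s}z^β`, the gradient coefficients
satisfy `g^{αβ̄}·∂f/∂z̄^β = (P'(s)/u''(s))·z^α`; consequently the gradient vector
field is `c` times the holomorphic Euler vector field `z^α ∂/∂z^α` (for a constant
`c`) if and only if `P'/u''` is a constant `c`. Here `p = u'`, `q = u''`, `dP = P'`. -/
theorem stmt19 (n : ℕ) (hn : 2 ≤ n) (p q dP : ℝ → ℝ)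
    (hp : ∀ s, 0 < p s) (hq : ∀ s, 0 < q s)
    (ginv : EuclideanSpace ℂ (Fin n) → Matrix (Fin n) (Fin n) ℂ)
    (hginv : ∀ z, z ≠ 0 → ∀ α β, ginv z α β
      = ((Real.exp (sOf z) / p (sOf z) : ℝ) : ℂ) * (if α = β then 1 else 0)
        + z α * (starRingEnd ℂ) (z β) * ((1 / q (sOf z) - 1 / p (sOf z) : ℝ) : ℂ)) :
    (∀ z : EuclideanSpace ℂ (Fin n), z ≠ 0 → ∀ α,
      ∑ β, ginv z α β * (((dP (sOf z) * Real.exp (-(sOf z)) : ℝ) : ℂ) * z β)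
        = ((dP (sOf z) / q (sOf z) : ℝ) : ℂ) * z α)
    ∧ ((∃ c : ℝ, ∀ s, dP s / q s = c) ↔
        (∃ c : ℝ, ∀ z : EuclideanSpace ℂ (Fin n), z ≠ 0 → ∀ α,
          ∑ β, ginv z α β * (((dP (sOf z) * Real.exp (-(sOf z)) : ℝ) : ℂ) * z β)
            = (c : ℂ) * z α)) :=
  stmt19_general n hn p q dP ginv hginv
end
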